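/- arXiv:2605.23753 — 8 statements merged into one kernel-verified Lean document; each statement's English description precedes it below -/
import Mathlib

section
/- Let k ≥ 2 and L ≥ 0 be integers and n ≥ 2 with k^L ≤ ((k−1)/(k+3))·n. Sample a random relation-tracing graph on [n]. Fix, before the graph is sampled, a decision function D : {0,1}* × [n] × 𝓡 → {0,1}. Suppose that after observing the graph one assigns finite binary strings x_1,…,x_n (each a function of the sampled permutations) to the vertices such that for every t, s ∈ [n] and every r ∈ 𝓡, D(x_t, s, r) = 1 if and only if t = σ_r(s). Then, writing |x_t| for the bit-length of x_t, E[(1/n)·Σ_{t=1}^n |x_t|] ≥ (1/4)·k^L·log₂(n/k) − 1/2, where the expectation is over the random graph. -/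
open scoped Classical

/-- `traceP σ r` is the composite permutation `σ_{r_ℓ} ∘ ⋯ ∘ σ_{r_1}` for the
sequence of relation types `r = (r_1, …, r_ℓ)` (the identity when `r = []`). -/
def traceP {n k : ℕ} (σ : Fin k → Equiv.Perm (Fin n)) : List (Fin k) → Equiv.Perm (Fin n)
  | [] => 1
  | j :: rest => traceP σ rest * σ j

/-!
Fix a vertex `t`. Because `D` answers every query of depth `≤ L` correctly, the string `x σ t`
determines `t` and the vertex `origin σ t u = σ_u⁻¹ t` for every word `u` with `|u| ≤ L`. This
view fixes each `σ j` on the `b` vertices that reach `t` in fewer than `L` steps, so it has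
probability at most `n⁻¹ (n / k)^(-k b)`. Binary strings of average length `ℓ` carry at most
`2ℓ + 1` bits of empirical entropy, hence `E |x σ t| ≥ (log₂ n + k E[b] log₂ (n / k) - 1) / 2`.

To bound `E[b]`, explore the words of length `< L` in shortlex order. A word whose vertex was
already seen is a duplicate; each duplicate has a suffix that is a fresh duplicate (its tail is
not a duplicate), and a swap argument on `σ j` bounds the probability of a fresh duplicate at
`a` by `#prior / (n - #prior)`. Under `k^L ≤ (k - 1) / (k + 3) n` at most half of the
`k^(L-1)` words of length `L - 1` are duplicates on average, so `E[b] ≥ k^(L-1) / 2`.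
-/

open Finset Equiv

namespace RelationTracing

section Words

variable (α : Type*) [Fintype α]

def wordsOfLength (ℓ : ℕ) : Finset (List α) :=
  (univ : Finset (List.Vector α ℓ)).map ⟨List.Vector.toList, List.Vector.toList_injective⟩

noncomputable def wordsBelow (ℓ : ℕ) : Finset (List α) :=
  (range ℓ).biUnion (wordsOfLength α)

variable {α}

@[simp]
lemma mem_wordsOfLength {ℓ : ℕ} {u : List α} : u ∈ wordsOfLength α ℓ ↔ u.length = ℓ := by
  simp only [wordsOfLength, mem_map, mem_univ, true_and, Function.Embedding.coeFn_mk]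
  exact ⟨fun ⟨v, hv⟩ => hv ▸ v.toList_length, fun h => ⟨⟨u, h⟩, rfl⟩⟩

@[simp]
lemma mem_wordsBelow {ℓ : ℕ} {u : List α} : u ∈ wordsBelow α ℓ ↔ u.length < ℓ := by
  simp [wordsBelow]

lemma card_wordsOfLength (ℓ : ℕ) : #(wordsOfLength α ℓ) = Fintype.card α ^ ℓ := by
  rw [wordsOfLength, card_map, card_univ, card_vector]

lemma sum_wordsBelow {M : Type*} [AddCommMonoid M] (g : ℕ → M) (ℓ : ℕ) :
    ∑ u ∈ wordsBelow α ℓ, g u.length = ∑ i ∈ range ℓ, (Fintype.card α ^ i) • g i := by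
  rw [wordsBelow, sum_biUnion]
  · refine sum_congr rfl fun i _ => ?_
    rw [sum_congr rfl fun u hu => congrArg g (mem_wordsOfLength.1 hu), sum_const,
      card_wordsOfLength]
  · intro i _ j _ hij
    exact disjoint_left.2 fun u hi hj => hij ((mem_wordsOfLength.1 hi).symm.trans
      (mem_wordsOfLength.1 hj))

lemma sub_one_mul_card_wordsBelow (ℓ : ℕ) :
    ((Fintype.card α : ℝ) - 1) * #(wordsBelow α ℓ) = (Fintype.card α : ℝ) ^ ℓ - 1 := by
  have h := sum_wordsBelow (α := α) (fun _ => (1 : ℕ)) ℓ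
  simp only [smul_eq_mul, mul_one, ← card_eq_sum_ones] at h
  rw [h, mul_comm]
  push_cast
  exact geom_sum_mul _ _

end Words

lemma sum_inv_two_pow_le_one (S : Finset (List Bool)) :
    ∑ y ∈ S, ((2 : ℝ) ^ (2 * y.length + 1))⁻¹ ≤ 1 := by
  have hsub : S ⊆ wordsBelow Bool (S.sup List.length + 1) := fun y hy =>
    mem_wordsBelow.2 (Nat.lt_succ_of_le (le_sup hy))
  calc ∑ y ∈ S, ((2 : ℝ) ^ (2 * y.length + 1))⁻¹
      ≤ ∑ y ∈ wordsBelow Bool (S.sup List.length + 1), ((2 : ℝ) ^ (2 * y.length + 1))⁻¹ :=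
        sum_le_sum_of_subset_of_nonneg hsub fun _ _ _ => by positivity
    _ = (∑ i ∈ range (S.sup List.length + 1), (1 / 2 : ℝ) ^ i) / 2 := by
        rw [sum_wordsBelow (fun i => ((2 : ℝ) ^ (2 * i + 1))⁻¹), sum_div]
        refine sum_congr rfl fun i _ => ?_
        rw [Fintype.card_bool, nsmul_eq_mul, pow_succ, pow_mul, one_div_pow, show (2 : ℝ) ^ 2 = 2 * 2 by norm_num, mul_pow]
        push_cast
        field_simp
    _ ≤ 1 := by linarith [sum_geometric_two_le (S.sup List.length + 1)]

/-- Source coding bound: the empirical entropy of `f` is at most `2 · (average length) + 1`.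
The weights `2 ^ -(2|y| + 1)` have total mass at most one, and Gibbs' inequality compares
them with the empirical distribution of `f`. -/
theorem sum_logb_card_div_card_fiber_le {T : Type*} [Fintype T] (f : T → List Bool) :
    ∑ a, Real.logb 2 (Fintype.card T / #{b | f b = f a}) ≤
      ∑ a, (2 * (f a).length + 1 : ℝ) := by
  set N : ℝ := (Fintype.card T : ℝ)
  set c : List Bool → ℕ := fun y => #{b | f b = y}
  set w : List Bool → ℝ := fun y => ((2 : ℝ) ^ (2 * y.length + 1))⁻¹
  have hc : ∀ a, 0 < c (f a) := fun a => card_pos.2 ⟨a, by simp⟩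
  have hlog2 : 0 < Real.log 2 := Real.log_pos one_lt_two
  have hpoint : ∀ a, Real.log (N / c (f a)) ≤
      (2 * (f a).length + 1) * Real.log 2 + (N * w (f a) / c (f a) - 1) := by
    intro a
    have hN : 0 < N := Nat.cast_pos.2 (Fintype.card_pos_iff.2 ⟨a⟩)
    have hca : (0 : ℝ) < c (f a) := by exact_mod_cast hc a
    have hgibbs := Real.log_le_sub_one_of_pos (x := N * w (f a) / c (f a)) (by positivity)
    rw [mul_div_right_comm, Real.log_mul (by positivity) (by positivity), Real.log_inv,
      Real.log_pow] at hgibbs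
    push_cast at hgibbs
    linarith [mul_div_right_comm N (w (f a)) (c (f a) : ℝ)]
  have hmass : ∑ a, N * w (f a) / c (f a) ≤ N := by
    have := sum_comp (s := univ) (fun y => N * w y / c y) f
    rw [this, sum_congr rfl fun y hy => ?_, ← mul_sum]
    · exact mul_le_of_le_one_right (by positivity) (sum_inv_two_pow_le_one _)
    · obtain ⟨a, -, rfl⟩ := mem_image.1 hy
      rw [nsmul_eq_mul, mul_div_cancel₀ _ (by exact_mod_cast (hc a).ne')]
  have hsum := sum_le_sum fun a (_ : a ∈ univ) => hpoint a
  rw [sum_add_distrib, sum_sub_distrib, ← sum_mul] at hsum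
  simp only [Real.logb, ← sum_div]
  rw [div_le_iff₀ hlog2]
  simp only [sum_const, card_univ, nsmul_eq_mul, mul_one] at hsum
  linarith

/-- The permutations that agree with `g` on `s` form a coset of the pointwise stabiliser
of `s`, which is the symmetric group on the complement. -/
lemma card_filter_perm_eqOn {α : Type*} [Fintype α] (s : Finset α)
    (g : Perm α) : #{π : Perm α | ∀ x ∈ s, π x = g x} = (Fintype.card α - #s).factorial := by
  calc #{π : Perm α | ∀ x ∈ s, π x = g x}
      = Fintype.card {f : Perm α // ∀ a, ¬ a ∉ s → f a = a} := by
        rw [← Fintype.card_subtype]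
        refine Fintype.card_congr (Equiv.subtypeEquiv (Equiv.mulLeft g⁻¹) fun π => ?_)
        simp only [not_not, Equiv.coe_mulLeft, Perm.mul_apply, Perm.inv_eq_iff_eq]
    _ = Fintype.card (Perm {a // a ∉ s}) :=
        (Fintype.card_congr (Perm.subtypeEquivSubtypePerm _)).symm
    _ = _ := by rw [Fintype.card_perm, Fintype.card_subtype_compl, Fintype.card_coe]

section Tracing

variable {n k : ℕ}

def origin (σ : Fin k → Perm (Fin n)) (t : Fin n) (u : List (Fin k)) : Fin n :=
  (traceP σ u)⁻¹ t

@[simp]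
lemma origin_nil (σ : Fin k → Perm (Fin n)) (t : Fin n) : origin σ t [] = t := rfl

lemma origin_cons (σ : Fin k → Perm (Fin n)) (t : Fin n) (c : Fin k) (u : List (Fin k)) :
    origin σ t (c :: u) = (σ c)⁻¹ (origin σ t u) := by
  simp [origin, traceP]

@[simp]
lemma apply_origin_cons (σ : Fin k → Perm (Fin n)) (t : Fin n) (c : Fin k) (u : List (Fin k)) :
    σ c (origin σ t (c :: u)) = origin σ t u := by
  simp [origin_cons]

/-- The vertices from which `t` is reached along a relation path of length `< ℓ`. -/
noncomputable def inBall (σ : Fin k → Perm (Fin n)) (t : Fin n) (ℓ : ℕ) : Finset (Fin n) :=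
  (wordsBelow (Fin k) ℓ).image (origin σ t)

@[simp]
lemma inBall_zero (σ : Fin k → Perm (Fin n)) (t : Fin n) : inBall σ t 0 = ∅ := by
  simp [inBall, wordsBelow]

lemma add_three_mul_card_inBall_le (hk : 2 ≤ k) {L : ℕ}
    (hkL : (k : ℝ) ^ L ≤ ((k : ℝ) - 1) / ((k : ℝ) + 3) * n) (σ : Fin k → Perm (Fin n))
    (t : Fin n) : (k + 3) * #(inBall σ t L) ≤ n := by
  have hwords := sub_one_mul_card_wordsBelow (α := Fin k) L
  rw [Fintype.card_fin] at hwords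
  have hk1 : (0 : ℝ) < k - 1 := by
    have : (2 : ℝ) ≤ k := by exact_mod_cast hk
    linarith
  rw [div_mul_eq_mul_div, le_div_iff₀ (by positivity)] at hkL
  have hreal : ((k : ℝ) + 3) * #(wordsBelow (Fin k) L) ≤ n := by
    refine le_of_mul_le_mul_left ?_ hk1
    nlinarith
  calc (k + 3) * #(inBall σ t L) ≤ (k + 3) * #(wordsBelow (Fin k) L) :=
        Nat.mul_le_mul_left _ card_image_le
    _ ≤ n := by exact_mod_cast hreal

/-- The view of radius `L` from `t` pins down each `σ j` on `(σ j)⁻¹ (inBall σ t L)`. -/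
lemma card_filter_origin_eq_le (σ : Fin k → Perm (Fin n)) (t : Fin n) (L : ℕ) :
    #{σ' : Fin k → Perm (Fin n) | ∀ u : List (Fin k), u.length ≤ L →
        origin σ' t u = origin σ t u} ≤ (n - #(inBall σ t L)).factorial ^ k := by
  set S : Fin k → Finset (Perm (Fin n)) := fun j =>
    {π | ∀ x ∈ (inBall σ t L).image ⇑(σ j)⁻¹, π x = σ j x}
  have hsub : ({σ' : Fin k → Perm (Fin n) | ∀ u : List (Fin k), u.length ≤ L →
      origin σ' t u = origin σ t u} : Finset _) ⊆ Fintype.piFinset S := by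
    intro σ' hσ'
    simp only [mem_filter, mem_univ, true_and] at hσ'
    refine Fintype.mem_piFinset.2 fun j => mem_filter.2 ⟨mem_univ _, ?_⟩
    simp only [inBall, mem_image, mem_wordsBelow]
    rintro _ ⟨_, ⟨u, hu, rfl⟩, rfl⟩
    rw [← origin_cons, apply_origin_cons, ← hσ' (j :: u) (by simp; omega), apply_origin_cons,
      hσ' u hu.le]
  calc _ ≤ #(Fintype.piFinset S) := card_le_card hsub
    _ = _ := by
      rw [Fintype.card_piFinset, prod_congr rfl fun j _ => ?_, prod_const, card_univ,
        Fintype.card_fin]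
      rw [← card_image_of_injective (inBall σ t L) (σ j)⁻¹.injective]
      convert card_filter_perm_eqOn _ (σ j)
      exact (Fintype.card_fin n).symm

lemma mul_logb_le_logb_factorial_pow_div (hn : 0 < n) (hk : 2 ≤ k) {b F : ℕ}
    (hb : (k + 3) * b ≤ n) (hF : 0 < F) (hFb : F ≤ (n - b).factorial ^ k) :
    k * b * Real.logb 2 (n / k) ≤ Real.logb 2 ((n.factorial : ℝ) ^ k / F) := by
  have hbn : b ≤ n := le_trans (Nat.le_mul_of_pos_left b (by omega)) hb
  have hkR : (2 : ℝ) ≤ k := by exact_mod_cast hk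
  have hratio : (n : ℝ) / k ≤ (n + 1 - b : ℕ) := by
    have hbR : ((k : ℝ) + 3) * b ≤ n := by exact_mod_cast hb
    rw [div_le_iff₀ (by positivity), Nat.cast_sub (by omega)]
    push_cast
    nlinarith
  have hdesc : ((n : ℝ) / k) ^ b ≤ n.descFactorial b :=
    (pow_le_pow_left₀ (by positivity) hratio b).trans
      (by exact_mod_cast Nat.pow_sub_le_descFactorial n b)
  have hcount : ((n : ℝ) / k) ^ (k * b) * F ≤ (n.factorial : ℝ) ^ k :=
    calc ((n : ℝ) / k) ^ (k * b) * F
        ≤ (n.descFactorial b : ℝ) ^ k * ((n - b).factorial : ℝ) ^ k := by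
          rw [mul_comm k b, pow_mul]
          exact mul_le_mul (pow_le_pow_left₀ (by positivity) hdesc k) (by exact_mod_cast hFb)
            (by positivity) (by positivity)
      _ = (n.factorial : ℝ) ^ k := by
          rw [← mul_pow, mul_comm]
          exact_mod_cast congrArg (· ^ k) (Nat.factorial_mul_descFactorial hbn)
  calc k * b * Real.logb 2 (n / k) = Real.logb 2 (((n : ℝ) / k) ^ (k * b)) := by
        rw [Real.logb_pow]
        push_cast
        ring
    _ ≤ _ := Real.logb_le_logb_of_le one_lt_two (by positivity)
        (by rw [le_div_iff₀ (by exact_mod_cast hF)]; exact hcount)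

end Tracing

section Duplicates

variable {n k : ℕ}

def shortlex (u : List (Fin k)) : ℕ ×ₗ List (Fin k) :=
  toLex (u.length, u)

lemma shortlex_injective : Function.Injective (shortlex (k := k)) :=
  fun _ _ h => (Prod.ext_iff.1 (toLex.injective h)).2

lemma length_le_of_shortlex_lt {u v : List (Fin k)} (h : shortlex v < shortlex u) :
    v.length ≤ u.length := by
  rcases Prod.Lex.toLex_lt_toLex.1 h with h | ⟨h, -⟩
  exacts [h.le, h.le]

lemma shortlex_lt_cons (c : Fin k) (w : List (Fin k)) : shortlex w < shortlex (c :: w) :=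
  Prod.Lex.toLex_lt_toLex.2 (Or.inl (by simp))

lemma shortlex_lt_of_cons_lt_cons {c : Fin k} {u v : List (Fin k)}
    (h : shortlex (c :: v) < shortlex (c :: u)) : shortlex v < shortlex u := by
  rcases Prod.Lex.toLex_lt_toLex.1 h with h | ⟨h, h'⟩
  · exact Prod.Lex.toLex_lt_toLex.2 (Or.inl (by simpa using h))
  · refine Prod.Lex.toLex_lt_toLex.2 (Or.inr ⟨by simpa using h, ?_⟩)
    exact ((List.cons_lt_cons_iff.1 h').resolve_left (lt_irrefl c)).2

noncomputable def prior (a : List (Fin k)) : Finset (List (Fin k)) :=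
  {v ∈ wordsBelow (Fin k) (a.length + 1) | shortlex v < shortlex a}

lemma mem_prior {a v : List (Fin k)} : v ∈ prior a ↔ shortlex v < shortlex a := by
  rw [prior, mem_filter, mem_wordsBelow, Nat.lt_succ_iff]
  exact ⟨And.right, fun h => ⟨length_le_of_shortlex_lt h, h⟩⟩

lemma mem_prior_of_cons_mem_prior {a w : List (Fin k)} {c : Fin k} (h : c :: w ∈ prior a) :
    w ∈ prior a :=
  mem_prior.2 ((shortlex_lt_cons c w).trans (mem_prior.1 h))

lemma sub_one_mul_card_prior_le (hk : 1 ≤ k) (a : List (Fin k)) :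
    ((k : ℝ) - 1) * #(prior a) ≤ (k : ℝ) ^ (a.length + 1) := by
  have hwords := sub_one_mul_card_wordsBelow (α := Fin k) (a.length + 1)
  rw [Fintype.card_fin] at hwords
  have hk1 : (0 : ℝ) ≤ k - 1 := by
    have : (1 : ℝ) ≤ k := by exact_mod_cast hk
    linarith
  have hcard : (#(prior a) : ℝ) ≤ #(wordsBelow (Fin k) (a.length + 1)) := by
    exact_mod_cast card_filter_le _ _
  nlinarith

def IsDup (σ : Fin k → Perm (Fin n)) (t : Fin n) (u : List (Fin k)) : Prop :=
  ∃ v ∈ prior u, origin σ t v = origin σ t u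

def IsFreshDup (σ : Fin k → Perm (Fin n)) (t : Fin n) (a : List (Fin k)) : Prop :=
  IsDup σ t a ∧ ¬ IsDup σ t a.tail

lemma not_isDup_nil (σ : Fin k → Perm (Fin n)) (t : Fin n) : ¬ IsDup σ t [] := by
  rintro ⟨v, hv, -⟩
  rcases Prod.Lex.toLex_lt_toLex.1 (mem_prior.1 hv) with h | ⟨-, h⟩
  · exact Nat.not_lt_zero _ h
  · exact List.not_lt_nil _ h

lemma IsDup.exists_isFreshDup_drop {σ : Fin k → Perm (Fin n)} {t : Fin n} {r : List (Fin k)}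
    (h : IsDup σ t r) : ∃ i < r.length, IsFreshDup σ t (r.drop i) := by
  induction r with
  | nil => exact absurd h (not_isDup_nil σ t)
  | cons c w ih =>
    by_cases hw : IsDup σ t w
    · obtain ⟨i, hi, hfresh⟩ := ih hw
      exact ⟨i + 1, by simpa using hi, by simpa using hfresh⟩
    · exact ⟨0, by simp, h, hw⟩

/-- The non-duplicate words of length `m` lead to `t` from pairwise distinct vertices. -/
lemma pow_le_card_inBall_add_card_isDup (σ : Fin k → Perm (Fin n)) (t : Fin n) (m : ℕ) :
    k ^ m ≤ #(inBall σ t (m + 1)) + #{r ∈ wordsOfLength (Fin k) m | IsDup σ t r} := by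
  have hinj : Set.InjOn (origin σ t) ↑({r ∈ wordsOfLength (Fin k) m | ¬ IsDup σ t r}) := by
    intro r₁ h₁ r₂ h₂ heq
    rw [mem_coe, mem_filter] at h₁ h₂
    by_contra hne
    rcases lt_or_gt_of_ne (shortlex_injective.ne hne) with hlt | hlt
    · exact h₂.2 ⟨r₁, mem_prior.2 hlt, heq⟩
    · exact h₁.2 ⟨r₂, mem_prior.2 hlt, heq.symm⟩
  have hsub : {r ∈ wordsOfLength (Fin k) m | ¬ IsDup σ t r}.image (origin σ t) ⊆
      inBall σ t (m + 1) := by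
    refine image_subset_image fun r hr => ?_
    rw [mem_wordsBelow, (mem_wordsOfLength.1 (mem_filter.1 hr).1)]
    exact Nat.lt_succ_self m
  calc k ^ m = #{r ∈ wordsOfLength (Fin k) m | IsDup σ t r} +
        #{r ∈ wordsOfLength (Fin k) m | ¬ IsDup σ t r} := by
        rw [card_filter_add_card_filter_not, card_wordsOfLength, Fintype.card_fin]
    _ ≤ _ := by
        rw [add_comm, ← card_image_of_injOn hinj]
        exact Nat.add_le_add_right (card_le_card hsub) _

lemma sum_card_isDup_le (t : Fin n) (m : ℕ) :
    ∑ σ : Fin k → Perm (Fin n), #{r ∈ wordsOfLength (Fin k) m | IsDup σ t r} ≤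
      ∑ r ∈ wordsOfLength (Fin k) m, ∑ i ∈ range m,
        #{σ : Fin k → Perm (Fin n) | IsFreshDup σ t (r.drop i)} := by
  calc ∑ σ : Fin k → Perm (Fin n), #{r ∈ wordsOfLength (Fin k) m | IsDup σ t r}
      ≤ ∑ σ : Fin k → Perm (Fin n), ∑ r ∈ wordsOfLength (Fin k) m, ∑ i ∈ range m,
          if IsFreshDup σ t (r.drop i) then 1 else 0 := by
        refine sum_le_sum fun σ _ => ?_
        rw [card_filter]
        refine sum_le_sum fun r hr => ?_
        split_ifs with hdup
        · obtain ⟨i, hi, hfresh⟩ := hdup.exists_isFreshDup_drop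
          rw [mem_wordsOfLength.1 hr] at hi
          calc 1 = if IsFreshDup σ t (r.drop i) then 1 else 0 := by rw [if_pos hfresh]
            _ ≤ _ := single_le_sum (f := fun i => if IsFreshDup σ t (r.drop i) then 1 else 0)
                (fun _ _ => Nat.zero_le _) (mem_range.2 hi)
        · exact Nat.zero_le _
    _ = _ := by
        rw [sum_comm]
        refine sum_congr rfl fun r _ => ?_
        rw [sum_comm]
        simp only [card_filter]

end Duplicates

section FreshDuplicates

variable {n k : ℕ}

lemma update_mul_right_injective {ι G : Type*} [DecidableEq ι] [Group G] (i : ι) (g : G) :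
    Function.Injective fun f : ι → G => Function.update f i (f i * g) := by
  intro f₁ f₂ h
  funext c
  have hc := congrFun h c
  by_cases hci : c = i
  · subst hci
    simpa using hc
  · simpa [Function.update_of_ne hci] using hc

/-- The vertices not yet attained as values of `(σ j)⁻¹` by the words `j :: v ∈ Q`. -/
noncomputable def freshVertices (σ : Fin k → Perm (Fin n)) (t : Fin n) (j : Fin k)
    (Q : Finset (List (Fin k))) : Finset (Fin n) :=
  {w | ∀ v, j :: v ∈ Q → origin σ t (j :: v) ≠ w}

lemma sub_card_le_card_freshVertices (σ : Fin k → Perm (Fin n)) (t : Fin n) (j : Fin k)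
    (Q : Finset (List (Fin k))) : n - #Q ≤ #(freshVertices σ t j Q) := by
  have hsub : (Q.image (origin σ t))ᶜ ⊆ freshVertices σ t j Q := by
    intro w hw
    simp only [mem_compl, mem_image, not_exists, not_and] at hw
    exact mem_filter.2 ⟨mem_univ _, fun v hv => hw _ hv⟩
  calc n - #Q ≤ n - #(Q.image (origin σ t)) := Nat.sub_le_sub_left card_image_le n
    _ = #(Q.image (origin σ t))ᶜ := by rw [card_compl, Fintype.card_fin]
    _ ≤ _ := card_le_card hsub

lemma origin_mem_freshVertices_of_isFreshDup {σ : Fin k → Perm (Fin n)} {t : Fin n} {j : Fin k}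
    {r : List (Fin k)} (h : IsFreshDup σ t (j :: r)) :
    origin σ t (j :: r) ∈ freshVertices σ t j (prior (j :: r)) := by
  refine mem_filter.2 ⟨mem_univ _, fun v hv heq => h.2 ⟨v, ?_, ?_⟩⟩
  · exact mem_prior.2 (shortlex_lt_of_cons_lt_cons (mem_prior.1 hv))
  · simpa using congrArg (σ j) heq

lemma origin_update_mul_swap {Q : Finset (List (Fin k))} (hQ : ∀ c w, c :: w ∈ Q → w ∈ Q)
    {σ : Fin k → Perm (Fin n)} {t : Fin n} {j : Fin k} {w₁ w₂ : Fin n}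
    (hw₁ : w₁ ∈ freshVertices σ t j Q) (hw₂ : w₂ ∈ freshVertices σ t j Q) :
    ∀ v ∈ Q, origin (Function.update σ j (σ j * swap w₁ w₂)) t v = origin σ t v := by
  intro v
  induction v with
  | nil => simp
  | cons c v ih =>
    intro hv
    rw [origin_cons, origin_cons, ih (hQ c v hv)]
    by_cases hc : c = j
    · subst hc
      rw [Function.update_self, mul_inv_rev, swap_inv, Perm.mul_apply, ← origin_cons]
      exact swap_apply_of_ne_of_ne ((mem_filter.1 hw₁).2 v hv) ((mem_filter.1 hw₂).2 v hv)
    · rw [Function.update_of_ne hc]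

/-- Given the vertices of all earlier words, the vertex of a fresh duplicate `j :: r` is the
value of `(σ j)⁻¹` at a point where it has not been evaluated yet, so it is uniform among the
at least `n - #(prior a)` fresh vertices, of which at most `#(prior a)` are earlier vertices.
The injection `(σ, w) ↦ (σ with that value swapped to w, old value)` makes this exact. -/
theorem sub_card_prior_mul_card_isFreshDup_le (t : Fin n) (a : List (Fin k)) :
    (n - #(prior a)) * #{σ : Fin k → Perm (Fin n) | IsFreshDup σ t a} ≤
      #(prior a) * Fintype.card (Fin k → Perm (Fin n)) := by
  rcases a with _ | ⟨j, r⟩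
  · simp [IsFreshDup, not_isDup_nil]
  set Q := prior (j :: r)
  set F : Finset (Fin k → Perm (Fin n)) := {σ | IsFreshDup σ t (j :: r)}
  set Φ : (Σ _ : Fin k → Perm (Fin n), Fin n) → (Σ _ : Fin k → Perm (Fin n), Fin n) :=
    fun p => ⟨Function.update p.1 j (p.1 j * swap (origin p.1 t (j :: r)) p.2),
      origin p.1 t (j :: r)⟩
  have hswap : ∀ σ ∈ F, ∀ w ∈ freshVertices σ t j Q, ∀ v ∈ Q,
      origin (Φ ⟨σ, w⟩).1 t v = origin σ t v := fun σ hσ w hw =>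
    origin_update_mul_swap (fun _ _ => mem_prior_of_cons_mem_prior)
      (origin_mem_freshVertices_of_isFreshDup (mem_filter.1 hσ).2) hw
  have hΦ : ∀ σ ∈ F, ∀ w ∈ freshVertices σ t j Q, origin (Φ ⟨σ, w⟩).1 t (j :: r) = w := by
    intro σ hσ w hw
    rw [origin_cons, hswap σ hσ w hw r (mem_prior.2 (shortlex_lt_cons j r))]
    simp only [Φ, Function.update_self, mul_inv_rev, swap_inv, Perm.mul_apply, ← origin_cons,
      swap_apply_left]
  have hmaps : Set.MapsTo Φ ↑(F.sigma fun σ => freshVertices σ t j Q)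
      ↑(univ.sigma fun σ => Q.image (origin σ t)) := by
    rintro ⟨σ, w⟩ hp
    rw [mem_coe, mem_sigma] at hp
    obtain ⟨v, hv, hval⟩ := (mem_filter.1 hp.1).2.1
    refine mem_sigma.2 ⟨mem_univ _, mem_image.2 ⟨v, hv, ?_⟩⟩
    rw [hswap σ hp.1 w hp.2 v hv, hval]
  have hinj : Set.InjOn Φ ↑(F.sigma fun σ => freshVertices σ t j Q) := by
    rintro ⟨σ₁, w₁⟩ hp₁ ⟨σ₂, w₂⟩ hp₂ heq
    rw [mem_coe, mem_sigma] at hp₁ hp₂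
    obtain ⟨hσ, hψ⟩ := Sigma.mk.inj_iff.1 heq
    obtain rfl : w₁ = w₂ := by
      rw [← hΦ σ₁ hp₁.1 w₁ hp₁.2, ← hΦ σ₂ hp₂.1 w₂ hp₂.2]
      exact congrArg (origin · t (j :: r)) hσ
    simp only [eq_of_heq hψ] at hσ
    rw [update_mul_right_injective j _ hσ]
  calc (n - #Q) * #F ≤ ∑ σ ∈ F, #(freshVertices σ t j Q) := by
        rw [mul_comm, ← smul_eq_mul]
        exact card_nsmul_le_sum _ _ _ fun σ _ => sub_card_le_card_freshVertices σ t j Q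
    _ = #(F.sigma fun σ => freshVertices σ t j Q) := (card_sigma _ _).symm
    _ ≤ #(univ.sigma fun σ => Q.image (origin σ t)) := card_le_card_of_injOn Φ hmaps hinj
    _ = ∑ σ, #(Q.image (origin σ t)) := card_sigma _ _
    _ ≤ ∑ _σ : Fin k → Perm (Fin n), #Q := sum_le_sum fun _ _ => card_image_le
    _ = #Q * Fintype.card (Fin k → Perm (Fin n)) := by
        rw [sum_const, card_univ, smul_eq_mul, mul_comm]

end FreshDuplicates

section BallSize

variable {n k : ℕ}

lemma sub_mul_card_isFreshDup_le (hk : 2 ≤ k) (t : Fin n) (a : List (Fin k)) {X : ℝ}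
    (haX : (k : ℝ) ^ (a.length + 1) / (k - 1) ≤ X) (hXn : X ≤ n) :
    (n - X) * #{σ : Fin k → Perm (Fin n) | IsFreshDup σ t a} ≤
      Fintype.card (Fin k → Perm (Fin n)) * ((k : ℝ) ^ (a.length + 1) / (k - 1)) := by
  have hk1 : (0 : ℝ) < k - 1 := by
    have : (2 : ℝ) ≤ k := by exact_mod_cast hk
    linarith
  have hq : (#(prior a) : ℝ) ≤ k ^ (a.length + 1) / (k - 1) := by
    rw [le_div_iff₀ hk1, mul_comm]
    exact sub_one_mul_card_prior_le (by omega) a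
  have hqn : #(prior a) ≤ n := by exact_mod_cast hq.trans (haX.trans hXn)
  have hcount : ((n - #(prior a) : ℕ) : ℝ) * #{σ : Fin k → Perm (Fin n) | IsFreshDup σ t a} ≤
      #(prior a) * Fintype.card (Fin k → Perm (Fin n)) := by
    exact_mod_cast sub_card_prior_mul_card_isFreshDup_le t a
  rw [Nat.cast_sub hqn] at hcount
  calc (n - X) * #{σ : Fin k → Perm (Fin n) | IsFreshDup σ t a}
      ≤ (n - #(prior a)) * #{σ : Fin k → Perm (Fin n) | IsFreshDup σ t a} :=
        mul_le_mul_of_nonneg_right (by linarith) (Nat.cast_nonneg _)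
    _ ≤ _ := hcount.trans (by rw [mul_comm]; gcongr)

lemma sub_one_mul_sum_pow_le {k : ℝ} (hk : 1 ≤ k) (m : ℕ) :
    (k - 1) * ∑ i ∈ range m, k ^ (m - i + 1) ≤ k ^ (m + 2) := by
  induction m with
  | zero => simpa using by positivity
  | succ m ih =>
    rw [sum_range_succ']
    simp only [Nat.add_sub_add_right, Nat.sub_zero]
    have hpow : 0 ≤ k ^ (m + 2) := by positivity
    calc (k - 1) * (∑ i ∈ range m, k ^ (m - i + 1) + k ^ (m + 1 + 1))
        ≤ k ^ (m + 2) + (k - 1) * k ^ (m + 2) := by rw [mul_add]; linarith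
      _ = k ^ (m + 1 + 2) := by ring

lemma sub_mul_sum_card_isDup_le (hk : 2 ≤ k) (t : Fin n) (m : ℕ) {X : ℝ}
    (hmX : (k : ℝ) ^ (m + 1) / (k - 1) ≤ X) (hXn : X ≤ n) :
    (n - X) * ∑ σ : Fin k → Perm (Fin n), (#{r ∈ wordsOfLength (Fin k) m | IsDup σ t r} : ℝ) ≤
      Fintype.card (Fin k → Perm (Fin n)) * k ^ m * (k * X / (k - 1)) := by
  set K : ℝ := (Fintype.card (Fin k → Perm (Fin n)) : ℝ)
  have hkR : (2 : ℝ) ≤ k := by exact_mod_cast hk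
  have hk1 : (0 : ℝ) < k - 1 := by linarith
  have hgeom : ∑ i ∈ range m, (k : ℝ) ^ (m - i + 1) ≤ k * X := by
    rw [div_le_iff₀ hk1] at hmX
    refine le_of_mul_le_mul_left ?_ hk1
    calc _ ≤ (k : ℝ) ^ (m + 2) := sub_one_mul_sum_pow_le (by linarith) m
      _ = k * k ^ (m + 1) := by ring
      _ ≤ (k - 1) * (k * X) := by nlinarith
  calc (n - X) * ∑ σ : Fin k → Perm (Fin n),
        (#{r ∈ wordsOfLength (Fin k) m | IsDup σ t r} : ℝ)
      ≤ (n - X) * ∑ r ∈ wordsOfLength (Fin k) m, ∑ i ∈ range m,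
          (#{σ : Fin k → Perm (Fin n) | IsFreshDup σ t (r.drop i)} : ℝ) :=
        mul_le_mul_of_nonneg_left (by exact_mod_cast sum_card_isDup_le (k := k) t m)
          (sub_nonneg.2 hXn)
    _ ≤ ∑ r ∈ wordsOfLength (Fin k) m, ∑ i ∈ range m, K * ((k : ℝ) ^ (m - i + 1) / (k - 1)) := by
        rw [mul_sum]
        refine sum_le_sum fun r hr => ?_
        rw [mul_sum]
        refine sum_le_sum fun i _ => ?_
        have hlen : (r.drop i).length = m - i := by
          rw [List.length_drop, mem_wordsOfLength.1 hr]
        rw [← hlen]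
        refine sub_mul_card_isFreshDup_le hk t _ (le_trans ?_ hmX) hXn
        rw [hlen]
        exact div_le_div_of_nonneg_right (pow_le_pow_right₀ (by linarith) (by omega)) hk1.le
    _ = K * k ^ m * ((∑ i ∈ range m, (k : ℝ) ^ (m - i + 1)) / (k - 1)) := by
        rw [sum_const, card_wordsOfLength, Fintype.card_fin, ← mul_sum, ← sum_div, nsmul_eq_mul]
        push_cast
        ring
    _ ≤ K * k ^ m * (k * X / (k - 1)) := by gcongr

/-- Under `(k + 3) k^(m+1) ≤ (k - 1) n`, on average at most half of the `k^m` words of length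
`m` are duplicates. -/
theorem card_mul_pow_le_two_mul_sum_card_inBall (hk : 2 ≤ k) (t : Fin n) (m : ℕ)
    (hm : ((k : ℝ) + 3) * k ^ (m + 1) ≤ (k - 1) * n) :
    (Fintype.card (Fin k → Perm (Fin n)) : ℝ) * k ^ m ≤
      2 * ∑ σ : Fin k → Perm (Fin n), (#(inBall σ t (m + 1)) : ℝ) := by
  set K : ℝ := (Fintype.card (Fin k → Perm (Fin n)) : ℝ)
  set X : ℝ := k ^ (m + 1) / (k - 1)
  set dup : ℝ := ∑ σ : Fin k → Perm (Fin n), (#{r ∈ wordsOfLength (Fin k) m | IsDup σ t r} : ℝ)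
  have hkR : (2 : ℝ) ≤ k := by exact_mod_cast hk
  have hk1 : (0 : ℝ) < k - 1 := by linarith
  have hX : 0 < X := by positivity
  have hXn : (k + 3) * X ≤ n := by
    rw [mul_div_assoc', div_le_iff₀ hk1]
    linarith
  have hXn' : X < n := by nlinarith
  have hball : K * k ^ m ≤ ∑ σ : Fin k → Perm (Fin n), (#(inBall σ t (m + 1)) : ℝ) + dup := by
    have := sum_le_sum fun (σ : Fin k → Perm (Fin n)) (_ : σ ∈ univ) =>
      pow_le_card_inBall_add_card_isDup σ t m
    rw [sum_const, card_univ, smul_eq_mul, sum_add_distrib] at this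
    have hcast := (Nat.cast_le (α := ℝ)).2 this
    push_cast at hcast
    exact hcast
  have hdup := sub_mul_sum_card_isDup_le hk t m le_rfl hXn'.le
  have hkey : 2 * (k * X / (k - 1)) ≤ n - X := by
    rw [mul_div_assoc', div_le_iff₀ hk1]
    nlinarith [mul_nonneg (sub_nonneg.2 hXn) hk1.le,
      mul_nonneg (mul_nonneg (sub_nonneg.2 hkR) (by linarith : (0 : ℝ) ≤ k + 1)) hX.le]
  have hhalf : 2 * dup ≤ K * k ^ m := by
    refine le_of_mul_le_mul_left ?_ (sub_pos.2 hXn')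
    calc (n - X) * (2 * dup) ≤ K * k ^ m * (2 * (k * X / (k - 1))) := by linarith
      _ ≤ K * k ^ m * (n - X) := mul_le_mul_of_nonneg_left hkey (by positivity)
      _ = (n - X) * (K * k ^ m) := by ring
  linarith

end BallSize

section Information

variable {n k : ℕ}

lemma card_filter_prod_origin_eq_le (p : (Fin k → Perm (Fin n)) × Fin n) (L : ℕ) :
    #{p' : (Fin k → Perm (Fin n)) × Fin n | ∀ u : List (Fin k), u.length ≤ L →
        origin p'.1 p'.2 u = origin p.1 p.2 u} ≤ (n - #(inBall p.1 p.2 L)).factorial ^ k := by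
  have hsub : ({p' : (Fin k → Perm (Fin n)) × Fin n | ∀ u : List (Fin k), u.length ≤ L →
        origin p'.1 p'.2 u = origin p.1 p.2 u} : Finset _) ⊆
      ({σ' : Fin k → Perm (Fin n) | ∀ u : List (Fin k), u.length ≤ L →
        origin σ' p.2 u = origin p.1 p.2 u} : Finset _) ×ˢ {p.2} := by
    intro p' hp'
    have h := (mem_filter.1 hp').2
    have ht : p'.2 = p.2 := by simpa using h [] (Nat.zero_le L)
    refine mem_product.2 ⟨mem_filter.2 ⟨mem_univ _, ?_⟩, mem_singleton.2 ht⟩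
    rw [ht] at h
    exact h
  calc _ ≤ _ := card_le_card hsub
    _ = _ := by rw [card_product, card_singleton, mul_one]
    _ ≤ _ := card_filter_origin_eq_le p.1 p.2 L

lemma card_mul_logb_le_sum (hn : 1 ≤ n) (hk : 2 ≤ k) {L : ℕ}
    (hkL : (k : ℝ) ^ L ≤ ((k : ℝ) - 1) / ((k : ℝ) + 3) * n) (t : Fin n) :
    (Fintype.card (Fin k → Perm (Fin n)) : ℝ) * (k ^ L / 2 * Real.logb 2 (n / k)) ≤
      ∑ σ : Fin k → Perm (Fin n),
        (Real.logb 2 n + k * #(inBall σ t L) * Real.logb 2 (n / k)) := by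
  have hlogn : 0 ≤ Real.logb 2 n := Real.logb_nonneg one_lt_two (by exact_mod_cast hn)
  have hkR : (2 : ℝ) ≤ k := by exact_mod_cast hk
  have hK : (0 : ℝ) ≤ Fintype.card (Fin k → Perm (Fin n)) := Nat.cast_nonneg _
  rw [sum_add_distrib, sum_const, card_univ, nsmul_eq_mul, ← sum_mul, ← mul_sum]
  cases L with
  | zero =>
    have hl : Real.logb 2 (n / k) ≤ Real.logb 2 n :=
      Real.logb_le_logb_of_le one_lt_two (by positivity) (div_le_self (by positivity) (by linarith))
    simp only [inBall_zero, card_empty, Nat.cast_zero, mul_zero, sum_const_zero, zero_mul,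
      add_zero, pow_zero]
    nlinarith
  | succ m =>
    rw [div_mul_eq_mul_div, le_div_iff₀ (by positivity)] at hkL
    have hm : ((k : ℝ) + 3) * k ^ (m + 1) ≤ (k - 1) * n := by linarith
    have hl : 0 ≤ Real.logb 2 (n / k) := by
      refine Real.logb_nonneg one_lt_two ((one_le_div (by positivity)).2 ?_)
      have : (k : ℝ) ≤ k ^ (m + 1) := le_self_pow₀ (by linarith) (by omega)
      nlinarith
    have hball := card_mul_pow_le_two_mul_sum_card_inBall hk t m hm
    rw [pow_succ]
    nlinarith [mul_nonneg hK hlogn,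
      mul_le_mul_of_nonneg_right hball (mul_nonneg hl (by linarith : (0 : ℝ) ≤ k))]

lemma card_prod_mul_logb_le_sum (hn : 1 ≤ n) (hk : 2 ≤ k) {L : ℕ}
    (hkL : (k : ℝ) ^ L ≤ ((k : ℝ) - 1) / ((k : ℝ) + 3) * n) :
    (Fintype.card ((Fin k → Perm (Fin n)) × Fin n) : ℝ) * (k ^ L / 2 * Real.logb 2 (n / k)) ≤
      ∑ p : (Fin k → Perm (Fin n)) × Fin n,
        (Real.logb 2 n + k * #(inBall p.1 p.2 L) * Real.logb 2 (n / k)) := by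
  rw [Fintype.sum_prod_type_right]
  calc _ = ∑ _t : Fin n,
        (Fintype.card (Fin k → Perm (Fin n)) : ℝ) * (k ^ L / 2 * Real.logb 2 (n / k)) := by
        rw [sum_const, card_univ, Fintype.card_prod, Fintype.card_fin, nsmul_eq_mul]
        push_cast
        ring
    _ ≤ _ := sum_le_sum fun t _ => card_mul_logb_le_sum hn hk hkL t

lemma logb_add_mul_card_inBall_le {β : Type*} [DecidableEq β] (hn : 0 < n) (hk : 2 ≤ k) {L : ℕ}
    (hkL : (k : ℝ) ^ L ≤ ((k : ℝ) - 1) / ((k : ℝ) + 3) * n)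
    (f : (Fin k → Perm (Fin n)) × Fin n → β)
    (hf : ∀ p p', f p' = f p → ∀ u : List (Fin k), u.length ≤ L →
      origin p'.1 p'.2 u = origin p.1 p.2 u)
    (p : (Fin k → Perm (Fin n)) × Fin n) :
    Real.logb 2 n + k * #(inBall p.1 p.2 L) * Real.logb 2 (n / k) ≤
      Real.logb 2 (Fintype.card ((Fin k → Perm (Fin n)) × Fin n) / #{p' | f p' = f p}) := by
  have hfiber : #{p' | f p' = f p} ≤ (n - #(inBall p.1 p.2 L)).factorial ^ k :=
    (card_le_card fun p' hp' => mem_filter.2 ⟨mem_univ _, hf p p' (mem_filter.1 hp').2⟩).trans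
      (card_filter_prod_origin_eq_le p L)
  have hc : 0 < #{p' | f p' = f p} := card_pos.2 ⟨p, by simp⟩
  have := mul_logb_le_logb_factorial_pow_div hn hk
    (add_three_mul_card_inBall_le hk hkL p.1 p.2) hc hfiber
  rw [Fintype.card_prod, Fintype.card_fun, Fintype.card_perm, Fintype.card_fin, Fintype.card_fin]
  push_cast
  rw [mul_comm ((n.factorial : ℝ) ^ k), mul_div_assoc, Real.logb_mul (by positivity)
    (div_pos (by positivity) (by exact_mod_cast hc)).ne']
  linarith

lemma origin_eq_of_decide_eq {β : Type*} {D : β → Fin n → List (Fin k) → Bool} {L : ℕ}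
    {y y' : β} {σ σ' : Fin k → Perm (Fin n)} {t t' : Fin n}
    (hy : ∀ s (r : List (Fin k)), r.length ≤ L → (D y s r = true ↔ t = traceP σ r s))
    (hy' : ∀ s (r : List (Fin k)), r.length ≤ L → (D y' s r = true ↔ t' = traceP σ' r s))
    (h : y' = y) {u : List (Fin k)} (hu : u.length ≤ L) : origin σ' t' u = origin σ t u := by
  have hu' := (hy' (origin σ t u) u hu).1 (h ▸ (hy (origin σ t u) u hu).2 (by simp [origin]))
  simp [origin, hu']

end Information

end RelationTracing

open RelationTracing

/-- Hardness of dense retrieval for relation-tracing graphs: any decision function `D`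
fixed before sampling, together with graph-dependent binary node features `x` that decide
all queries of length at most `L` correctly, must use expected average feature length at
least `(1/4)·k^L·log₂(n/k) − 1/2`. -/
theorem stmt0 (n k L : ℕ) (hn : 2 ≤ n) (hk : 2 ≤ k)
    (hkL : (k : ℝ) ^ L ≤ ((k : ℝ) - 1) / ((k : ℝ) + 3) * n)
    (D : List Bool → Fin n → List (Fin k) → Bool)
    (x : (Fin k → Equiv.Perm (Fin n)) → Fin n → List Bool)
    (hD : ∀ (σ : Fin k → Equiv.Perm (Fin n)) (t s : Fin n) (r : List (Fin k)),
      r.length ≤ L → (D (x σ t) s r = true ↔ t = traceP σ r s)) :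
    (1 : ℝ) / 4 * (k : ℝ) ^ L * Real.logb 2 ((n : ℝ) / k) - 1 / 2 ≤
      (∑ σ : Fin k → Equiv.Perm (Fin n),
          (1 / (n : ℝ)) * ∑ t : Fin n, ((x σ t).length : ℝ)) /
        (Fintype.card (Fin k → Equiv.Perm (Fin n)) : ℝ) := by
  set N := Fintype.card ((Fin k → Perm (Fin n)) × Fin n)
  set S := ∑ p : (Fin k → Perm (Fin n)) × Fin n, ((x p.1 p.2).length : ℝ)
  have hbits : (N : ℝ) * (k ^ L / 2 * Real.logb 2 (n / k)) ≤ 2 * S + N :=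
    calc (N : ℝ) * (k ^ L / 2 * Real.logb 2 (n / k))
        ≤ ∑ p : (Fin k → Perm (Fin n)) × Fin n,
            (Real.logb 2 n + k * #(inBall p.1 p.2 L) * Real.logb 2 (n / k)) :=
          card_prod_mul_logb_le_sum (by omega) hk hkL
      _ ≤ ∑ p : (Fin k → Perm (Fin n)) × Fin n,
            Real.logb 2 (N / #{p' : (Fin k → Perm (Fin n)) × Fin n | x p'.1 p'.2 = x p.1 p.2}) :=
          sum_le_sum fun p _ => logb_add_mul_card_inBall_le (by omega) hk hkL
            (fun p => x p.1 p.2)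
            (fun p p' h _ hu => origin_eq_of_decide_eq (hD p.1 p.2) (hD p'.1 p'.2) h hu) p
      _ ≤ ∑ p : (Fin k → Perm (Fin n)) × Fin n, (2 * (x p.1 p.2).length + 1 : ℝ) :=
          sum_logb_card_div_card_fiber_le fun p : (Fin k → Perm (Fin n)) × Fin n => x p.1 p.2
      _ = 2 * S + N := by
          rw [sum_add_distrib, ← mul_sum, sum_const, card_univ, nsmul_eq_mul, mul_one]
  have hrhs : (∑ σ : Fin k → Perm (Fin n), (1 / (n : ℝ)) * ∑ t : Fin n, ((x σ t).length : ℝ)) /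
      Fintype.card (Fin k → Perm (Fin n)) = S / N := by
    rw [← mul_sum, ← Fintype.sum_prod_type']
    simp only [N, Fintype.card_prod, Fintype.card_fin]
    push_cast
    field_simp
    rfl
  rw [hrhs, le_div_iff₀ (Nat.cast_pos.2 (Fintype.card_pos_iff.2 ⟨(1, ⟨0, by omega⟩)⟩))]
  linarith
end

section
/- Let k ≥ 2 and L ≥ 0 be integers with k^L ≤ ((k−1)/(k+4))·n, let σ_1,…,σ_k be independent uniform random permutations of [n], and fix t ∈ [n]. Define the random sets S_0 = {t}, S_{ℓ+1} = ⋃_{j=1}^{k} σ_j^{−1}(S_ℓ), B_ℓ = ⋃_{h=0}^{ℓ} S_h (with B_{−1} = ∅), and A_ℓ = S_ℓ \ B_{ℓ−1}. Then for every 0 ≤ ℓ ≤ L, E[|A_ℓ|] ≥ k^ℓ / 2. -/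
open scoped Classical

/-- `Sset σ t ℓ` is the set `S_ℓ` of nodes reachable from `t` by tracing exactly `ℓ`
inverse relation steps: `S_0 = {t}`, `S_{ℓ+1} = ⋃_{j=1}^k σ_j⁻¹(S_ℓ)`. -/
def Sset {n k : ℕ} (σ : Fin k → Equiv.Perm (Fin n)) (t : Fin n) : ℕ → Finset (Fin n)
  | 0 => {t}
  | ℓ + 1 => Finset.univ.biUnion fun j : Fin k => (Sset σ t ℓ).image fun v => (σ j)⁻¹ v

/-- `Bset σ t ℓ = B_ℓ = ⋃_{h=0}^ℓ S_h`, the set of vertices seen up to depth `ℓ`. -/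
def Bset {n k : ℕ} (σ : Fin k → Equiv.Perm (Fin n)) (t : Fin n) (ℓ : ℕ) : Finset (Fin n) :=
  (Finset.range (ℓ + 1)).biUnion (Sset σ t)

/-- `Aset σ t ℓ = A_ℓ = S_ℓ \ B_{ℓ−1}`, the vertices first seen at depth `ℓ`
(with `B_{−1} = ∅`, so `A_0 = S_0`). -/
def Aset {n k : ℕ} (σ : Fin k → Equiv.Perm (Fin n)) (t : Fin n) : ℕ → Finset (Fin n)
  | 0 => Sset σ t 0
  | ℓ + 1 => Sset σ t (ℓ + 1) \ Bset σ t ℓ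

/-!
Write `a_ℓ` for the expectation of `|A_ℓ|`. The preimages `σ_j⁻¹ v` (`v ∈ A_ℓ`, `j ≤ k`) lie in
`S_{ℓ+1}`, so by a second-order Bonferroni bound they contribute at least
`k |A_ℓ| - ∑_j |σ_j⁻¹ A_ℓ ∩ B_ℓ| - ½ ∑_{j ≠ i} |σ_j⁻¹ A_ℓ ∩ σ_i⁻¹ A_ℓ|` vertices to `A_{ℓ+1}`.
Exploring up to depth `ℓ` only reveals the values of the `σ_i⁻¹` on `B_{ℓ-1}`, and `A_ℓ` is
disjoint from `B_{ℓ-1}`; so, conditionally on what has been revealed, `σ_j⁻¹` maps each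
`v ∈ A_ℓ` to a uniform vertex among the `n - |B_{ℓ-1}| ≥ m` unrevealed ones, and each error term
has expectation at most `|A_ℓ| |T| / m` for the relevant set `T`. With `|A_ℓ| ≤ k^ℓ` and
`|B_ℓ| ≤ k^{ℓ+1}/(k-1)` this gives `a_{ℓ+1} ≥ k a_ℓ - (k²+1) k^{2ℓ+1} / (2(k-1)m)`, hence
`a_ℓ ≥ k^ℓ (1 - (k²+1)(k^ℓ-1) / (2(k-1)²m))`, and the hypothesis on `k^L` makes the bracket at
least `1/2` for `m = n - k^L/(k(k-1))`.

Expectations are sums over all `k`-tuples of permutations; the conditioning is realised by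
reindexing along `σ_j ↦ σ_j π` with `π` fixing the revealed vertices `σ_j⁻¹ B_{ℓ-1}` pointwise.
-/

open Finset Equiv

section Bonferroni

variable {α ι : Type*} [DecidableEq α] [DecidableEq ι]

theorem two_mul_sum_card_le_card_biUnion_add (X : ι → Finset α) (s : Finset ι) :
    2 * ∑ i ∈ s, #(X i) ≤ 2 * #(s.biUnion X) + ∑ i ∈ s, ∑ i' ∈ s.erase i, #(X i ∩ X i') := by
  induction s using Finset.induction_on with
  | empty => simp
  | @insert a s ha ih =>
    have hrow : ∀ i ∈ s, ∑ i' ∈ (insert a s).erase i, #(X i ∩ X i') =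
        #(X a ∩ X i) + ∑ i' ∈ s.erase i, #(X i ∩ X i') := fun i hi => by
      have hia : i ≠ a := fun h => ha (h ▸ hi)
      rw [erase_insert_of_ne hia.symm, sum_insert (by simp [ha]), inter_comm]
    have hcross : ∑ i ∈ insert a s, ∑ i' ∈ (insert a s).erase i, #(X i ∩ X i') =
        ∑ i ∈ s, ∑ i' ∈ s.erase i, #(X i ∩ X i') + 2 * ∑ i ∈ s, #(X a ∩ X i) := by
      rw [sum_insert ha, erase_insert ha, sum_congr rfl hrow, sum_add_distrib]
      ring
    have hinter : #(X a ∩ s.biUnion X) ≤ ∑ i ∈ s, #(X a ∩ X i) := by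
      rw [inter_biUnion]
      exact card_biUnion_le
    have hunion := card_union_add_card_inter (X a) (s.biUnion X)
    rw [sum_insert ha, biUnion_insert, hcross]
    omega

theorem sum_card_sub_le_card_biUnion_sdiff (X : ι → Finset α) (s : Finset ι) (B : Finset α) :
    ∑ i ∈ s, (#(X i) : ℝ) - ∑ i ∈ s, (#(X i ∩ B) : ℝ)
        - (∑ i ∈ s, ∑ i' ∈ s.erase i, (#(X i ∩ X i') : ℝ)) / 2 ≤ #(s.biUnion X \ B) := by
  have hbon : 2 * ∑ i ∈ s, (#(X i) : ℝ) ≤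
      2 * #(s.biUnion X) + ∑ i ∈ s, ∑ i' ∈ s.erase i, (#(X i ∩ X i') : ℝ) := by
    exact_mod_cast two_mul_sum_card_le_card_biUnion_add X s
  have hB : (#(s.biUnion X ∩ B) : ℝ) ≤ ∑ i ∈ s, (#(X i ∩ B) : ℝ) := by
    rw [biUnion_inter]
    exact_mod_cast card_biUnion_le
  have hsdiff : (#(s.biUnion X \ B) : ℝ) + #(s.biUnion X ∩ B) = #(s.biUnion X) := by
    exact_mod_cast card_sdiff_add_card_inter _ _
  linarith

end Bonferroni

section FixingPerms

variable {X : Type*} [Fintype X] [DecidableEq X]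

def fixingPerms (R : Finset X) : Finset (Perm X) := {π | ∀ x ∈ R, π x = x}

variable {R : Finset X}

theorem mem_fixingPerms {π : Perm X} : π ∈ fixingPerms R ↔ ∀ x ∈ R, π x = x := by
  simp [fixingPerms]

theorem one_mem_fixingPerms : 1 ∈ fixingPerms R :=
  mem_fixingPerms.2 fun _ _ => rfl

theorem inv_mem_fixingPerms {π : Perm X} (hπ : π ∈ fixingPerms R) : π⁻¹ ∈ fixingPerms R :=
  mem_fixingPerms.2 fun x hx => Perm.inv_eq_iff_eq.2 (mem_fixingPerms.1 hπ x hx).symm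

theorem card_compl_mul_card_filter_apply_eq_le {u : X} (hu : u ∉ R) (y : X) :
    #Rᶜ * #{π ∈ fixingPerms R | π y = u} ≤ #(fixingPerms R) := by
  -- Left multiplication by `swap u u'` moves the fibre over `u` onto the fibre over `u'`.
  have hfiber : ∀ u' ∈ Rᶜ,
      #{π ∈ fixingPerms R | π y = u'} = #{π ∈ fixingPerms R | π y = u} := by
    intro u' hu'
    have hswap : ∀ π ∈ fixingPerms R, swap u u' * π ∈ fixingPerms R := fun π hπ =>
      mem_fixingPerms.2 fun x hx => by
        rw [Perm.mul_apply, mem_fixingPerms.1 hπ x hx, swap_apply_of_ne_of_ne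
          (ne_of_mem_of_not_mem hx hu) (ne_of_mem_of_not_mem hx (mem_compl.1 hu'))]
    refine card_nbij' (swap u u' * ·) (swap u u' * ·) ?_ ?_ ?_ ?_
    · intro π hπ
      simp only [coe_filter, Set.mem_ofPred_eq] at hπ ⊢
      exact ⟨hswap π hπ.1, by rw [Perm.mul_apply, hπ.2, swap_apply_right]⟩
    · intro π hπ
      simp only [coe_filter, Set.mem_ofPred_eq] at hπ ⊢
      exact ⟨hswap π hπ.1, by rw [Perm.mul_apply, hπ.2, swap_apply_left]⟩
    · intro π _
      simp [← mul_assoc]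
    · intro π _
      simp [← mul_assoc]
  calc #Rᶜ * #{π ∈ fixingPerms R | π y = u}
      = ∑ u' ∈ Rᶜ, #{π ∈ fixingPerms R | π y = u'} := by
        rw [sum_congr rfl hfiber, sum_const, smul_eq_mul]
    _ = #{π ∈ fixingPerms R | π y ∈ Rᶜ} := sum_card_fiberwise_eq_card_filter _ _ _
    _ ≤ #(fixingPerms R) := card_filter_le _ _

theorem card_compl_mul_card_filter_inv_apply_mem_le {u : X} (hu : u ∉ R) (T : Finset X) :
    #Rᶜ * #{π ∈ fixingPerms R | π⁻¹ u ∈ T} ≤ #T * #(fixingPerms R) := by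
  rw [← sum_card_fiberwise_eq_card_filter, mul_sum, ← smul_eq_mul, ← sum_const]
  refine sum_le_sum fun y _ => ?_
  simp_rw [Perm.inv_eq_iff_eq, eq_comm (a := u)]
  exact card_compl_mul_card_filter_apply_eq_le hu y

theorem card_compl_mul_sum_card_image_inter_le {A : Finset X} (hAR : Disjoint A R)
    (T : Finset X) :
    #Rᶜ * ∑ π ∈ fixingPerms R, #(A.image ⇑π⁻¹ ∩ T) ≤ #A * #T * #(fixingPerms R) := by
  have hcount : ∀ π : Perm X, #(A.image ⇑π⁻¹ ∩ T) = #{v ∈ A | π⁻¹ v ∈ T} := fun π => by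
    rw [← filter_mem_eq_inter, filter_image, card_image_of_injective _ (Equiv.injective _)]
  have hswap := sum_card_bipartiteAbove_eq_sum_card_bipartiteBelow
    (s := fixingPerms R) (t := A) (r := fun π v => π⁻¹ v ∈ T)
  simp only [bipartiteAbove, bipartiteBelow] at hswap
  simp_rw [hcount]
  rw [hswap, mul_sum, mul_assoc, ← smul_eq_mul (a := #A), ← sum_const]
  exact sum_le_sum fun v hv =>
    card_compl_mul_card_filter_inv_apply_mem_le (disjoint_left.1 hAR hv) T

end FixingPerms

theorem sum_sum_apply_eq_sum_card_smul {α β M : Type*} [Fintype α] [AddCommMonoid M]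
    (G : α → Finset β) (g g' : α → β → α)
    (hg : ∀ a, ∀ b ∈ G a, b ∈ G (g a b) ∧ g' (g a b) b = a)
    (hg' : ∀ a, ∀ b ∈ G a, b ∈ G (g' a b) ∧ g (g' a b) b = a) (f : α → M) :
    ∑ a, ∑ b ∈ G a, f (g a b) = ∑ a, #(G a) • f a := by
  simp_rw [← sum_const]
  rw [sum_sigma', sum_sigma']
  exact sum_nbij' (fun x => ⟨g x.1 x.2, x.2⟩) (fun x => ⟨g' x.1 x.2, x.2⟩)
    (fun x hx => by simpa using (hg x.1 x.2 (mem_sigma.1 hx).2).1)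
    (fun x hx => by simpa using (hg' x.1 x.2 (mem_sigma.1 hx).2).1)
    (fun x hx => by simp [(hg x.1 x.2 (mem_sigma.1 hx).2).2])
    (fun x hx => by simp [(hg' x.1 x.2 (mem_sigma.1 hx).2).2])
    (fun _ _ => rfl)

section Conditioning

variable {X ι : Type*}

def DependsOnlyOn {β : Type*} (j : ι) (P : (ι → Perm X) → Finset X)
    (F : (ι → Perm X) → β) : Prop :=
  ∀ σ τ : ι → Perm X, (∀ i ≠ j, τ i = σ i) → (∀ v ∈ P σ, (τ j)⁻¹ v = (σ j)⁻¹ v) → F τ = F σ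

variable {j : ι} {P : (ι → Perm X) → Finset X} {β : Type*} {F : (ι → Perm X) → β}

theorem DependsOnlyOn.of_forall_inv_apply_eq
    (hF : ∀ σ τ : ι → Perm X, (∀ i, ∀ v ∈ P σ, (τ i)⁻¹ v = (σ i)⁻¹ v) → F τ = F σ) :
    DependsOnlyOn j P F := by
  refine fun σ τ hi hj => hF σ τ fun i v hv => ?_
  by_cases hij : i = j
  · exact hij ▸ hj v hv
  · rw [hi i hij]

theorem DependsOnlyOn.image_inv [DecidableEq X] (hP : DependsOnlyOn j P P) :
    DependsOnlyOn j P fun σ => (P σ).image ⇑(σ j)⁻¹ := by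
  intro σ τ hi hj
  simp only [hP σ τ hi hj]
  exact image_congr hj

variable [Fintype X] [DecidableEq X] [DecidableEq ι]

theorem DependsOnlyOn.apply_update_mul (hF : DependsOnlyOn j P F) {σ : ι → Perm X}
    {π : Perm X} (hπ : π ∈ fixingPerms ((P σ).image ⇑(σ j)⁻¹)) :
    F (Function.update σ j (σ j * π)) = F σ := by
  refine hF σ _ (fun i hi => Function.update_of_ne hi _ _) fun v hv => ?_
  rw [Function.update_self, mul_inv_rev, Perm.mul_apply,
    mem_fixingPerms.1 (inv_mem_fixingPerms hπ) _ (mem_image_of_mem _ hv)]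

theorem sum_sum_fixingPerms_update_mul [Fintype ι] {M : Type*} [AddCommMonoid M]
    (hP : DependsOnlyOn j P P) (f : (ι → Perm X) → M) :
    ∑ σ, ∑ π ∈ fixingPerms ((P σ).image ⇑(σ j)⁻¹), f (Function.update σ j (σ j * π)) =
      ∑ σ, #(fixingPerms ((P σ).image ⇑(σ j)⁻¹)) • f σ := by
  have hmem : ∀ σ, ∀ π ∈ fixingPerms ((P σ).image ⇑(σ j)⁻¹), π ∈ fixingPerms
      ((P (Function.update σ j (σ j * π))).image ⇑((Function.update σ j (σ j * π)) j)⁻¹) :=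
    fun σ π hπ => by rwa [hP.image_inv.apply_update_mul hπ]
  refine sum_sum_apply_eq_sum_card_smul _ _ (fun σ π => Function.update σ j (σ j * π⁻¹))
    (fun σ π hπ => ⟨hmem σ π hπ, ?_⟩) (fun σ π hπ => ⟨?_, ?_⟩) f
  · simp
  · simpa using inv_mem_fixingPerms (hmem σ π⁻¹ (inv_mem_fixingPerms hπ))
  · simp

/-- Conditionally on `σ_i` (`i ≠ j`) and on `σ_j⁻¹` restricted to `P σ`, the permutation `σ_j⁻¹`
maps `A σ` (disjoint from `P σ`) uniformly into the `card X - #(P σ)` unrevealed points. -/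
theorem sum_card_sub_mul_card_image_inter_le [Fintype ι] (hP : DependsOnlyOn j P P)
    {A T : (ι → Perm X) → Finset X} (hA : DependsOnlyOn j P A) (hT : DependsOnlyOn j P T)
    (hAP : ∀ σ, Disjoint (A σ) (P σ)) :
    ∑ σ, ((Fintype.card X : ℝ) - #(P σ)) * #((A σ).image ⇑(σ j)⁻¹ ∩ T σ) ≤
      ∑ σ, (#(A σ) : ℝ) * #(T σ) := by
  set G := fun σ : ι → Perm X => fixingPerms ((P σ).image ⇑(σ j)⁻¹) with hG
  set Φ := fun σ : ι → Perm X => (#((A σ).image ⇑(σ j)⁻¹ ∩ T σ) : ℝ) with hΦ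
  set w := fun σ => ((Fintype.card X : ℝ) - #(P σ)) / #(G σ) with hw
  have hGpos : ∀ σ, (0 : ℝ) < #(G σ) := fun σ =>
    Nat.cast_pos.2 (card_pos.2 ⟨1, one_mem_fixingPerms⟩)
  have hw_update : ∀ σ, ∀ π ∈ G σ, w (Function.update σ j (σ j * π)) = w σ := fun σ π hπ => by
    simp only [hw, hG]
    rw [hP.image_inv.apply_update_mul hπ, hP.apply_update_mul hπ]
  have hcount : ∀ σ, w σ * ∑ π ∈ G σ, Φ (Function.update σ j (σ j * π)) ≤ #(A σ) * #(T σ) := by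
    intro σ
    have hterm : ∀ π ∈ G σ, Φ (Function.update σ j (σ j * π)) =
        #(((A σ).image ⇑(σ j)⁻¹).image ⇑π⁻¹ ∩ T σ) := fun π hπ => by
      simp only [hΦ]
      rw [hA.apply_update_mul hπ, hT.apply_update_mul hπ, image_image]
      simp only [Function.update_self, mul_inv_rev, Perm.coe_mul]
    have key := card_compl_mul_sum_card_image_inter_le
      ((disjoint_image (σ j)⁻¹.injective).2 (hAP σ)) (T σ)
    rw [card_image_of_injective _ (Equiv.injective _), card_compl,
      card_image_of_injective _ (Equiv.injective _)] at key
    have key' : ((Fintype.card X : ℝ) - #(P σ)) *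
        ∑ π ∈ G σ, (#(((A σ).image ⇑(σ j)⁻¹).image ⇑π⁻¹ ∩ T σ) : ℝ) ≤
          #(A σ) * #(T σ) * #(G σ) := by
      rw [← Nat.cast_sub (card_le_univ (P σ))]
      exact_mod_cast key
    rw [sum_congr rfl hterm, hw, div_mul_eq_mul_div, div_le_iff₀ (hGpos σ)]
    exact key'
  calc ∑ σ, ((Fintype.card X : ℝ) - #(P σ)) * Φ σ
      = ∑ σ, #(G σ) • (w σ * Φ σ) := by
        refine sum_congr rfl fun σ _ => ?_
        rw [nsmul_eq_mul, hw, ← mul_assoc, mul_div_cancel₀ _ (hGpos σ).ne']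
    _ = ∑ σ, ∑ π ∈ G σ, w (Function.update σ j (σ j * π)) * Φ (Function.update σ j (σ j * π)) :=
        (sum_sum_fixingPerms_update_mul hP _).symm
    _ = ∑ σ, w σ * ∑ π ∈ G σ, Φ (Function.update σ j (σ j * π)) := by
        refine sum_congr rfl fun σ _ => ?_
        rw [mul_sum]
        exact sum_congr rfl fun π hπ => by rw [hw_update σ π hπ]
    _ ≤ ∑ σ, (#(A σ) : ℝ) * #(T σ) := sum_le_sum fun σ _ => hcount σ

end Conditioning

theorem pow_mul_one_sub_le_of_recursion {K E : ℝ} (hK : 0 ≤ K) {x : ℕ → ℝ} {L : ℕ}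
    (h₀ : 1 ≤ x 0) (hstep : ∀ d < L, K * x d - E * (K - 1) * K ^ (2 * d + 1) ≤ x (d + 1)) :
    ∀ ℓ ≤ L, K ^ ℓ * (1 - E * (K ^ ℓ - 1)) ≤ x ℓ := by
  intro ℓ hℓ
  induction ℓ with
  | zero => simpa using h₀
  | succ d ih =>
    calc K ^ (d + 1) * (1 - E * (K ^ (d + 1) - 1))
        = K * (K ^ d * (1 - E * (K ^ d - 1))) - E * (K - 1) * K ^ (2 * d + 1) := by ring
      _ ≤ K * x d - E * (K - 1) * K ^ (2 * d + 1) := by gcongr; exact ih (by omega)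
      _ ≤ x (d + 1) := hstep d (by omega)

theorem sq_add_one_mul_le_of_le_div_mul {K x n : ℝ} (hK : 2 ≤ K) (hx : 0 < x)
    (h : x ≤ (K - 1) / (K + 4) * n) :
    (K ^ 2 + 1) * x ≤ (K - 1) ^ 2 * (n - x / (K * (K - 1))) := by
  have hK1 : 0 < K - 1 := by linarith
  have hKK : 0 < K * (K - 1) := by positivity
  have h' : x * (K + 4) ≤ (K - 1) * n := by
    rwa [div_mul_eq_mul_div, le_div_iff₀ (by linarith)] at h
  have hm : (n - x / (K * (K - 1))) * (K * (K - 1)) = K * (K - 1) * n - x := by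
    field_simp
  refine le_of_mul_le_mul_right ?_ hKK
  rw [mul_assoc ((K - 1) ^ 2), hm]
  have hpoly : 0 ≤ 3 * K ^ 2 - 6 * K + 1 := by nlinarith
  nlinarith [mul_le_mul_of_nonneg_left h' (mul_pos hKK hK1).le,
    mul_nonneg (mul_nonneg hx.le hK1.le) hpoly]

section Exploration

variable {n k : ℕ} (σ : Fin k → Perm (Fin n)) (t : Fin n)

/-- `seenBefore σ t ℓ = B_{ℓ-1}`, including the case `B_{-1} = ∅`. -/
def seenBefore (ℓ : ℕ) : Finset (Fin n) := (range ℓ).biUnion (Sset σ t)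

theorem Sset_succ (ℓ : ℕ) :
    Sset σ t (ℓ + 1) = univ.biUnion fun j => (Sset σ t ℓ).image ⇑(σ j)⁻¹ := rfl

theorem Aset_eq_sdiff (ℓ : ℕ) : Aset σ t ℓ = Sset σ t ℓ \ seenBefore σ t ℓ := by
  cases ℓ <;> simp [Aset, seenBefore, Bset]

theorem disjoint_Aset_seenBefore (ℓ : ℕ) : Disjoint (Aset σ t ℓ) (seenBefore σ t ℓ) := by
  rw [Aset_eq_sdiff]
  exact sdiff_disjoint

theorem card_Aset_zero : #(Aset σ t 0) = 1 := by
  simp [Aset, Sset]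

theorem card_Sset_le (ℓ : ℕ) : #(Sset σ t ℓ) ≤ k ^ ℓ := by
  induction ℓ with
  | zero => simp [Sset]
  | succ ℓ ih =>
    rw [Sset_succ, pow_succ, mul_comm]
    calc #(univ.biUnion fun j => (Sset σ t ℓ).image ⇑(σ j)⁻¹)
        ≤ ∑ j : Fin k, #((Sset σ t ℓ).image ⇑(σ j)⁻¹) := card_biUnion_le
      _ ≤ ∑ _j : Fin k, k ^ ℓ := sum_le_sum fun j _ => card_image_le.trans ih
      _ = k * k ^ ℓ := by simp

theorem card_Aset_le (ℓ : ℕ) : #(Aset σ t ℓ) ≤ k ^ ℓ := by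
  rw [Aset_eq_sdiff]
  exact (card_le_card sdiff_subset).trans (card_Sset_le σ t ℓ)

theorem card_seenBefore_le (hk : 2 ≤ k) (ℓ : ℕ) :
    (#(seenBefore σ t ℓ) : ℝ) ≤ k ^ ℓ / (k - 1) := by
  have hk1 : (1 : ℝ) < k := by exact_mod_cast hk
  calc (#(seenBefore σ t ℓ) : ℝ) ≤ ∑ h ∈ range ℓ, (k : ℝ) ^ h := by
        exact_mod_cast card_biUnion_le.trans (sum_le_sum fun h _ => card_Sset_le σ t h)
    _ = (k ^ ℓ - 1) / (k - 1) := geom_sum_eq hk1.ne' ℓ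
    _ ≤ k ^ ℓ / (k - 1) := by gcongr; linarith

theorem card_seenBefore_le_of_lt (hk : 2 ≤ k) {d L : ℕ} (hd : d < L) :
    (#(seenBefore σ t d) : ℝ) ≤ k ^ L / (k * (k - 1)) := by
  have hk' : (2 : ℝ) ≤ k := by exact_mod_cast hk
  have hpow : (k : ℝ) ^ d ≤ k ^ L / k := by
    rw [le_div_iff₀ (by linarith), ← pow_succ]
    exact pow_le_pow_right₀ (by linarith) hd
  calc (#(seenBefore σ t d) : ℝ) ≤ k ^ d / (k - 1) := card_seenBefore_le σ t hk d
    _ ≤ k ^ L / k / (k - 1) := by gcongr; linarith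
    _ = k ^ L / (k * (k - 1)) := div_div _ _ _

theorem sub_le_card_Aset_succ (ℓ : ℕ) :
    k * (#(Aset σ t ℓ) : ℝ) - ∑ j, (#((Aset σ t ℓ).image ⇑(σ j)⁻¹ ∩ Bset σ t ℓ) : ℝ)
      - (∑ j, ∑ i ∈ univ.erase j,
          (#((Aset σ t ℓ).image ⇑(σ j)⁻¹ ∩ (Aset σ t ℓ).image ⇑(σ i)⁻¹) : ℝ)) / 2 ≤
      #(Aset σ t (ℓ + 1)) := by
  have hsub : (univ.biUnion fun j => (Aset σ t ℓ).image ⇑(σ j)⁻¹) \ Bset σ t ℓ ⊆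
      Aset σ t (ℓ + 1) := by
    refine sdiff_subset_sdiff (biUnion_mono fun j _ => image_subset_image ?_) le_rfl
    rw [Aset_eq_sdiff]
    exact sdiff_subset
  have hcard : ∀ j, (#((Aset σ t ℓ).image ⇑(σ j)⁻¹) : ℝ) = #(Aset σ t ℓ) := fun j => by
    rw [card_image_of_injective _ (Equiv.injective _)]
  have h := sum_card_sub_le_card_biUnion_sdiff (fun j => (Aset σ t ℓ).image ⇑(σ j)⁻¹) univ
    (Bset σ t ℓ)
  simp only [hcard, sum_const, card_univ, Fintype.card_fin, nsmul_eq_mul] at h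
  exact h.trans (by exact_mod_cast card_le_card hsub)

end Exploration

section Expectation

variable {n k : ℕ} (t : Fin n)

theorem Sset_congr {σ τ : Fin k → Perm (Fin n)} {ℓ : ℕ}
    (hτ : ∀ i, ∀ v ∈ seenBefore σ t ℓ, (τ i)⁻¹ v = (σ i)⁻¹ v) :
    ∀ h ≤ ℓ, Sset τ t h = Sset σ t h := by
  intro h hh
  induction h with
  | zero => rfl
  | succ h ih =>
    rw [Sset_succ, Sset_succ, ih (by omega)]
    refine biUnion_congr rfl fun i _ => image_congr fun v hv => hτ i v ?_
    exact mem_biUnion.2 ⟨h, mem_range.2 (by omega), hv⟩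

theorem dependsOnlyOn_Sset (j : Fin k) {ℓ h : ℕ} (hh : h ≤ ℓ) :
    DependsOnlyOn j (seenBefore · t ℓ) (Sset · t h) :=
  .of_forall_inv_apply_eq fun _ _ hτ => Sset_congr t hτ h hh

theorem dependsOnlyOn_seenBefore (j : Fin k) {ℓ h : ℕ} (hh : h ≤ ℓ + 1) :
    DependsOnlyOn j (seenBefore · t ℓ) (seenBefore · t h) := fun σ τ hi hj =>
  biUnion_congr rfl fun h' hh' =>
    dependsOnlyOn_Sset t j (by rw [mem_range] at hh'; omega) σ τ hi hj

theorem dependsOnlyOn_Aset (j : Fin k) (ℓ : ℕ) :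
    DependsOnlyOn j (seenBefore · t ℓ) (Aset · t ℓ) := fun σ τ hi hj => by
  simp only [Aset_eq_sdiff]
  exact congr_arg₂ (· \ ·) (dependsOnlyOn_Sset t j le_rfl σ τ hi hj)
    (dependsOnlyOn_seenBefore t j (by omega) σ τ hi hj)

theorem dependsOnlyOn_image_Aset {i j : Fin k} (hij : i ≠ j) (ℓ : ℕ) :
    DependsOnlyOn j (seenBefore · t ℓ) fun σ => (Aset σ t ℓ).image ⇑(σ i)⁻¹ :=
  fun σ τ hi hj => by simp only [dependsOnlyOn_Aset t j ℓ σ τ hi hj, hi i hij]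

theorem mul_sum_card_image_Aset_inter_le (j : Fin k) {ℓ : ℕ}
    {T : (Fin k → Perm (Fin n)) → Finset (Fin n)} (hT : DependsOnlyOn j (seenBefore · t ℓ) T)
    {m : ℝ} (hm : ∀ σ : Fin k → Perm (Fin n), m ≤ n - #(seenBefore σ t ℓ)) :
    m * ∑ σ, (#((Aset σ t ℓ).image ⇑(σ j)⁻¹ ∩ T σ) : ℝ) ≤
      ∑ σ, (#(Aset σ t ℓ) : ℝ) * #(T σ) := by
  have h := sum_card_sub_mul_card_image_inter_le (dependsOnlyOn_seenBefore t j (by omega))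
    (dependsOnlyOn_Aset t j ℓ) hT (disjoint_Aset_seenBefore · t ℓ)
  rw [Fintype.card_fin] at h
  rw [mul_sum]
  exact (sum_le_sum fun σ _ => mul_le_mul_of_nonneg_right (hm σ) (Nat.cast_nonneg _)).trans h

theorem sum_card_Aset_mul_le {ℓ : ℕ} {T : (Fin k → Perm (Fin n)) → Finset (Fin n)} {b : ℝ}
    (hT : ∀ σ : Fin k → Perm (Fin n), (#(T σ) : ℝ) ≤ b) :
    ∑ σ, (#(Aset σ t ℓ) : ℝ) * #(T σ) ≤
      Fintype.card (Fin k → Perm (Fin n)) * ((k : ℝ) ^ ℓ * b) := by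
  rw [← nsmul_eq_mul, ← card_univ, ← sum_const]
  refine sum_le_sum fun σ _ => mul_le_mul ?_ (hT σ) (Nat.cast_nonneg _) (by positivity)
  exact_mod_cast card_Aset_le σ t ℓ

variable {ℓ : ℕ} {m : ℝ}

theorem sum_card_image_Aset_inter_Bset_le (hk : 2 ≤ k) (j : Fin k) (hm₀ : 0 < m)
    (hm : ∀ σ : Fin k → Perm (Fin n), m ≤ n - #(seenBefore σ t ℓ)) :
    ∑ σ, (#((Aset σ t ℓ).image ⇑(σ j)⁻¹ ∩ Bset σ t ℓ) : ℝ) ≤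
      Fintype.card (Fin k → Perm (Fin n)) * (k ^ ℓ * (k ^ (ℓ + 1) / (k - 1))) / m := by
  rw [le_div_iff₀ hm₀, mul_comm]
  exact (mul_sum_card_image_Aset_inter_le t j (dependsOnlyOn_seenBefore t j le_rfl) hm).trans
    (sum_card_Aset_mul_le t fun σ => card_seenBefore_le σ t hk (ℓ + 1))

theorem sum_card_image_Aset_inter_image_Aset_le {i j : Fin k} (hij : i ≠ j) (hm₀ : 0 < m)
    (hm : ∀ σ : Fin k → Perm (Fin n), m ≤ n - #(seenBefore σ t ℓ)) :
    ∑ σ, (#((Aset σ t ℓ).image ⇑(σ j)⁻¹ ∩ (Aset σ t ℓ).image ⇑(σ i)⁻¹) : ℝ) ≤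
      Fintype.card (Fin k → Perm (Fin n)) * (k ^ ℓ * k ^ ℓ) / m := by
  rw [le_div_iff₀ hm₀, mul_comm]
  refine (mul_sum_card_image_Aset_inter_le t j (dependsOnlyOn_image_Aset t hij ℓ) hm).trans
    (sum_card_Aset_mul_le t fun σ => ?_)
  rw [card_image_of_injective _ (Equiv.injective _)]
  exact_mod_cast card_Aset_le σ t ℓ

theorem sub_le_sum_card_Aset_succ (hk : 2 ≤ k) (hm₀ : 0 < m)
    (hm : ∀ σ : Fin k → Perm (Fin n), m ≤ n - #(seenBefore σ t ℓ)) :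
    k * ∑ σ : Fin k → Perm (Fin n), (#(Aset σ t ℓ) : ℝ) - Fintype.card (Fin k → Perm (Fin n)) *
        (((k : ℝ) ^ 2 + 1) * k ^ (2 * ℓ + 1) / (2 * (k - 1) * m)) ≤
      ∑ σ : Fin k → Perm (Fin n), (#(Aset σ t (ℓ + 1)) : ℝ) := by
  set N : ℝ := (Fintype.card (Fin k → Perm (Fin n)) : ℝ)
  have hk1 : (0 : ℝ) < k - 1 := by
    have : (2 : ℝ) ≤ k := by exact_mod_cast hk
    linarith
  have hB : ∑ σ : Fin k → Perm (Fin n), ∑ j,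
      (#((Aset σ t ℓ).image ⇑(σ j)⁻¹ ∩ Bset σ t ℓ) : ℝ) ≤
        k * (N * (k ^ ℓ * (k ^ (ℓ + 1) / (k - 1))) / m) := by
    rw [sum_comm]
    refine (sum_le_sum fun j _ => sum_card_image_Aset_inter_Bset_le t hk j hm₀ hm).trans ?_
    rw [sum_const, card_univ, Fintype.card_fin, nsmul_eq_mul]
  have hArow : ∀ j : Fin k, ∑ σ : Fin k → Perm (Fin n), ∑ i ∈ univ.erase j,
      (#((Aset σ t ℓ).image ⇑(σ j)⁻¹ ∩ (Aset σ t ℓ).image ⇑(σ i)⁻¹) : ℝ) ≤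
        (k - 1) * (N * (k ^ ℓ * k ^ ℓ) / m) := fun j => by
    rw [sum_comm]
    refine (sum_le_sum fun i hi =>
      sum_card_image_Aset_inter_image_Aset_le t (ne_of_mem_erase hi) hm₀ hm).trans ?_
    rw [sum_const, card_erase_of_mem (mem_univ j), card_univ, Fintype.card_fin, nsmul_eq_mul,
      Nat.cast_pred (by omega)]
  have hA : ∑ σ : Fin k → Perm (Fin n), ∑ j, ∑ i ∈ univ.erase j,
      (#((Aset σ t ℓ).image ⇑(σ j)⁻¹ ∩ (Aset σ t ℓ).image ⇑(σ i)⁻¹) : ℝ) ≤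
        k * ((k - 1) * (N * (k ^ ℓ * k ^ ℓ) / m)) := by
    rw [sum_comm]
    refine (sum_le_sum fun j _ => hArow j).trans ?_
    rw [sum_const, card_univ, Fintype.card_fin, nsmul_eq_mul]
  have hpt := sum_le_sum fun (σ : Fin k → Perm (Fin n)) (_ : σ ∈ univ) =>
    sub_le_card_Aset_succ σ t ℓ
  rw [sum_sub_distrib, sum_sub_distrib, ← sum_div, ← mul_sum] at hpt
  have herr : k * (N * (k ^ ℓ * (k ^ (ℓ + 1) / (k - 1))) / m) +
      k * ((k - 1) * (N * (k ^ ℓ * k ^ ℓ) / m)) / 2 =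
        N * (((k : ℝ) ^ 2 + 1) * k ^ (2 * ℓ + 1) / (2 * (k - 1) * m)) := by
    field_simp
    ring
  linarith

theorem le_average_card_Aset {L : ℕ} (hk : 2 ≤ k) (hm₀ : 0 < m)
    (hm : ∀ d < L, ∀ σ : Fin k → Perm (Fin n), m ≤ n - #(seenBefore σ t d)) :
    ∀ ℓ ≤ L, (k : ℝ) ^ ℓ * (1 - (k ^ 2 + 1) / (2 * (k - 1) ^ 2 * m) * (k ^ ℓ - 1)) ≤
      (∑ σ : Fin k → Perm (Fin n), (#(Aset σ t ℓ) : ℝ)) / Fintype.card (Fin k → Perm (Fin n)) := by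
  set N : ℝ := (Fintype.card (Fin k → Perm (Fin n)) : ℝ)
  have hN : 0 < N := Nat.cast_pos.2 Fintype.card_pos
  have hk1 : (0 : ℝ) < k - 1 := by
    have : (2 : ℝ) ≤ k := by exact_mod_cast hk
    linarith
  refine pow_mul_one_sub_le_of_recursion (Nat.cast_nonneg k) ?_ fun d hd => ?_
  · simp [card_Aset_zero, N]
  · rw [le_div_iff₀ hN]
    calc _ = k * ∑ σ : Fin k → Perm (Fin n), (#(Aset σ t d) : ℝ) - N *
          (((k : ℝ) ^ 2 + 1) * k ^ (2 * d + 1) / (2 * (k - 1) * m)) := by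
          field_simp
      _ ≤ _ := sub_le_sum_card_Aset_succ t hk hm₀ (hm d hd)

end Expectation

theorem stmt4_general (n k L : ℕ) (hk : 2 ≤ k)
    (hkL : (k : ℝ) ^ L ≤ ((k : ℝ) - 1) / ((k : ℝ) + 4) * n) (t : Fin n) :
    ∀ ℓ ≤ L,
      (k : ℝ) ^ ℓ / 2 ≤
        (∑ σ : Fin k → Equiv.Perm (Fin n), ((Aset σ t ℓ).card : ℝ)) /
          (Fintype.card (Fin k → Equiv.Perm (Fin n)) : ℝ) := by
  intro ℓ hℓ
  have hK : (2 : ℝ) ≤ k := by exact_mod_cast hk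
  have hmL := sq_add_one_mul_le_of_le_div_mul hK (by positivity) hkL
  set m : ℝ := n - k ^ L / (k * (k - 1))
  have hm₀ : 0 < m := by
    have : (0 : ℝ) < (k ^ 2 + 1) * k ^ L := by positivity
    nlinarith
  have hseen : ∀ d < L, ∀ σ : Fin k → Perm (Fin n), m ≤ n - #(seenBefore σ t d) :=
    fun d hd σ => sub_le_sub_left (card_seenBefore_le_of_lt σ t hk hd) n
  have hE : (k ^ 2 + 1) / (2 * (k - 1) ^ 2 * m) * ((k : ℝ) ^ ℓ - 1) ≤ 1 / 2 := by
    have hpow : (k : ℝ) ^ ℓ ≤ k ^ L := pow_le_pow_right₀ (by linarith) hℓ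
    rw [div_mul_eq_mul_div, div_le_iff₀ (mul_pos (mul_pos two_pos (pow_pos (by linarith) 2)) hm₀)]
    nlinarith
  calc (k : ℝ) ^ ℓ / 2
      ≤ k ^ ℓ * (1 - (k ^ 2 + 1) / (2 * (k - 1) ^ 2 * m) * (k ^ ℓ - 1)) := by
        nlinarith [pow_pos (by linarith : (0 : ℝ) < k) ℓ]
    _ ≤ _ := le_average_card_Aset t hk hm₀ hseen ℓ hℓ

/-- For independent uniform permutations `σ_1,…,σ_k` of `[n]` with `k^L ≤ (k−1)/(k+4)·n`,
the expected number of vertices first seen at depth `ℓ` satisfies `E[|A_ℓ|] ≥ k^ℓ/2` for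
every `ℓ ≤ L`. -/
theorem stmt4 (n k L : ℕ) (hn : 2 ≤ n) (hk : 2 ≤ k)
    (hkL : (k : ℝ) ^ L ≤ ((k : ℝ) - 1) / ((k : ℝ) + 4) * n) (t : Fin n) :
    ∀ ℓ ≤ L,
      (k : ℝ) ^ ℓ / 2 ≤
        (∑ σ : Fin k → Equiv.Perm (Fin n), ((Aset σ t ℓ).card : ℝ)) /
          (Fintype.card (Fin k → Equiv.Perm (Fin n)) : ℝ) :=
  stmt4_general n k L hk hkL t
end

section
/- Let k ≥ 2 and L ≥ 1 be integers, and let a_0, a_1, …, a_L be nonnegative reals with a_0 = 1 and a_{ℓ+1} ≥ k·a_ℓ·(1 − (1/2)·(k−1)·k^{ℓ−L}) for every 0 ≤ ℓ ≤ L−1. Then a_L ≥ (k^L + 1)/2 > k^L / 2. -/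
/-- Recursion bound: if `a_0 = 1`, all `a_ℓ ≥ 0`, and
`a_{ℓ+1} ≥ k·a_ℓ·(1 − (1/2)(k−1)k^{ℓ−L})` for `0 ≤ ℓ ≤ L−1`
(where `k^{ℓ−L} = k^ℓ/k^L`), then `a_L ≥ (k^L + 1)/2 > k^L/2`. -/
theorem stmt5 (k L : ℕ) (hk : 2 ≤ k) (hL : 1 ≤ L)
    (a : ℕ → ℝ) (ha0 : a 0 = 1) (hnn : ∀ ℓ ≤ L, 0 ≤ a ℓ)
    (hrec : ∀ ℓ < L,
      (k : ℝ) * a ℓ * (1 - 1 / 2 * ((k : ℝ) - 1) * ((k : ℝ) ^ ℓ / (k : ℝ) ^ L)) ≤ a (ℓ + 1)) :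
    ((k : ℝ) ^ L + 1) / 2 ≤ a L ∧ (k : ℝ) ^ L / 2 < ((k : ℝ) ^ L + 1) / 2 := by
  have hk2 : (2:ℝ) ≤ (k:ℝ) := by exact_mod_cast hk
  have hkp : (0:ℝ) < (k:ℝ) := by linarith
  have hKL : (0:ℝ) < (k:ℝ)^L := pow_pos hkp L
  have hKLne : ((k:ℝ)^L) ≠ 0 := ne_of_gt hKL
  have key : ∀ ℓ, ℓ ≤ L → (k:ℝ)^ℓ * (1 - ((k:ℝ)^ℓ - 1)/(2*(k:ℝ)^L)) ≤ a ℓ := by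
    intro ℓ
    induction ℓ with
    | zero => intro _; simp [ha0]
    | succ n ih =>
      intro h
      have hn : n ≤ L := Nat.le_of_succ_le h
      have hlt : n < L := h
      have H1 := ih hn
      have H2 := hrec n hlt
      have hQ1 : (1:ℝ) ≤ (k:ℝ)^n := one_le_pow₀ (by linarith)
      have hQL : (k:ℝ)^(n+1) ≤ (k:ℝ)^L := pow_le_pow_right₀ (by linarith) h
      have hc : (0:ℝ) ≤ 1 - 1 / 2 * ((k : ℝ) - 1) * ((k : ℝ) ^ n / (k : ℝ) ^ L) := by
        have h1 : 1/2*((k:ℝ)-1)*((k:ℝ)^n/(k:ℝ)^L) = (((k:ℝ)-1)*(k:ℝ)^n)/(2*(k:ℝ)^L) := by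
          ring
        rw [sub_nonneg, h1, div_le_one (by positivity)]
        have h2 := hQL
        rw [pow_succ] at h2
        nlinarith [pow_pos hkp n]
      have step1 : (k:ℝ) * ((k:ℝ)^n * (1 - ((k:ℝ)^n - 1)/(2*(k:ℝ)^L)))
          * (1 - 1 / 2 * ((k : ℝ) - 1) * ((k : ℝ) ^ n / (k : ℝ) ^ L))
          ≤ (k:ℝ) * a n * (1 - 1 / 2 * ((k : ℝ) - 1) * ((k : ℝ) ^ n / (k : ℝ) ^ L)) := by
        have := mul_le_mul_of_nonneg_right (mul_le_mul_of_nonneg_left H1 hkp.le) hc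
        linarith
      have hx : (0:ℝ) ≤ ((k:ℝ)^n - 1)/(2*(k:ℝ)^L) :=
        div_nonneg (by linarith) (by positivity)
      have hy : (0:ℝ) ≤ 1/2*((k:ℝ)-1)*((k:ℝ)^n/(k:ℝ)^L) :=
        mul_nonneg (by nlinarith) (by positivity)
      have hsum : ((k:ℝ)^n - 1)/(2*(k:ℝ)^L) + 1/2*((k:ℝ)-1)*((k:ℝ)^n/(k:ℝ)^L)
          = ((k:ℝ)^(n+1)-1)/(2*(k:ℝ)^L) := by
        field_simp
        ring
      have step0 : (k:ℝ)^(n+1) * (1 - ((k:ℝ)^(n+1) - 1)/(2*(k:ℝ)^L))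
          ≤ (k:ℝ) * ((k:ℝ)^n * (1 - ((k:ℝ)^n - 1)/(2*(k:ℝ)^L)))
          * (1 - 1 / 2 * ((k : ℝ) - 1) * ((k : ℝ) ^ n / (k : ℝ) ^ L)) := by
        rw [pow_succ] at *
        nlinarith [mul_nonneg (mul_nonneg (pow_nonneg hkp.le n) hkp.le) (mul_nonneg hx hy)]
      linarith
  have hmain := key L le_rfl
  constructor
  · have : (k:ℝ)^L * (1 - ((k:ℝ)^L - 1)/(2*(k:ℝ)^L)) = ((k:ℝ)^L + 1)/2 := by
      field_simp
      ring
    linarith [hmain, this ▸ hmain]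
  · linarith
end

section
/- Let n ≥ 2 and k ≥ 1 be integers, let d = ⌈log₂ n⌉, and let bin : [n] → {0,1}^d be the binary encoding of integers (with bin(n) taken to be bin(0), so that bin is injective on [n]). Let σ_1,…,σ_k be permutations of [n] and assign to each node s ∈ [n] the feature vector x_s = (bin(σ_1(s)), …, bin(σ_k(s))) ∈ {0,1}^{k·d}. Then for every j ∈ [k] there exist a matrix W_j ∈ ℝ^{n×kd} and a vector b ∈ ℝ^n such that for every s ∈ [n] the maximum of i ↦ (W_j x_s + b)_i over i ∈ [n] is attained uniquely at i = σ_j(s); consequently, for every s ∈ [n] and every sequence r = (r_1,…,r_ℓ) of relation types in [k], the iterative procedure v_0 = s, v_i = argmax_{u ∈ [n]} (W_{r_i} x_{v_{i−1}} + b)_u for i = 1,…,ℓ terminates with v_ℓ = σ_r(s). -/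
/-- `binEnc n d i` is the binary encoding (as a 0/1 real vector of length `d`) of the
node `i ∈ [n]`. -/
def binEnc (n d : ℕ) (i : Fin n) : Fin d → ℝ := fun b => if (i : ℕ).testBit (b : ℕ) then 1 else 0

/-- Success of local iterative rules: with `d = ⌈log₂ n⌉` and node features
`x_s = (bin(σ_1(s)), …, bin(σ_k(s))) ∈ {0,1}^{k·d}`, for every relation `j` there are a
matrix `W_j ∈ ℝ^{n×kd}` and a vector `b ∈ ℝ^n` such that `i ↦ (W_j x_s + b)_i` is uniquely
maximized at `i = σ_j(s)`; consequently any run of the iterative argmax procedure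
`v_0 = s`, `v_i = argmax_u (W_{r_i} x_{v_{i−1}} + b)_u` ends at `v_ℓ = σ_r(s)`. -/
theorem stmt6 (n k : ℕ) (hn : 2 ≤ n) (hk : 1 ≤ k)
    (d : ℕ) (hd : d = Nat.clog 2 n)
    (σ : Fin k → Equiv.Perm (Fin n))
    (x : Fin n → Fin k × Fin d → ℝ)
    (hx : ∀ (s : Fin n) (jb : Fin k × Fin d), x s jb = binEnc n d (σ jb.1 s) jb.2) :
    ∃ (W : Fin k → Matrix (Fin n) (Fin k × Fin d) ℝ) (b : Fin n → ℝ),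
      (∀ (j : Fin k) (s : Fin n) (i : Fin n), i ≠ σ j s →
        (W j).mulVec (x s) i + b i < (W j).mulVec (x s) (σ j s) + b (σ j s)) ∧
      (∀ (s : Fin n) (r : List (Fin k)) (v : ℕ → Fin n),
        v 0 = s →
        (∀ (i : ℕ) (hi : i < r.length), ∀ u : Fin n,
          (W (r.get ⟨i, hi⟩)).mulVec (x (v i)) u + b u ≤
            (W (r.get ⟨i, hi⟩)).mulVec (x (v i)) (v (i + 1)) + b (v (i + 1))) →
        v r.length = traceP σ r s) := by
  classical
  set W : Fin k → Matrix (Fin n) (Fin k × Fin d) ℝ :=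
    fun j i p => if p.1 = j then 2 * binEnc n d i p.2 - 1 else 0 with hW
  set b : Fin n → ℝ := fun i => - ∑ b' : Fin d, binEnc n d i b' with hb
  -- value formula
  have hval : ∀ (j : Fin k) (s i : Fin n),
      (W j).mulVec (x s) i + b i
        = ∑ b' : Fin d, (if (i : ℕ).testBit (b' : ℕ) = ((σ j s : Fin n) : ℕ).testBit (b' : ℕ)
            then (0:ℝ) else -1) := by
    intro j s i
    have h1 : (W j).mulVec (x s) i
        = ∑ b' : Fin d, (2 * binEnc n d i b' - 1) * binEnc n d (σ j s) b' := by
      simp only [Matrix.mulVec, dotProduct, hW]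
      rw [Fintype.sum_prod_type]
      rw [Finset.sum_eq_single j]
      · simp [hx]
      · intro j' _ hj'
        simp [hj']
      · simp
    have h2 : b i = -∑ b' : Fin d, binEnc n d i b' := rfl
    rw [h1, h2, ← sub_eq_add_neg, ← Finset.sum_sub_distrib]
    · congr 1
      ext b'
      simp only [binEnc]
      by_cases p : (i : ℕ).testBit (b' : ℕ) <;> by_cases q : ((σ j s : Fin n) : ℕ).testBit (b' : ℕ) <;>
        simp [p, q] <;> norm_num
  -- injectivity of encoding
  have hinj : ∀ i i' : Fin n, (∀ b' : Fin d, (i : ℕ).testBit (b' : ℕ) = (i' : ℕ).testBit (b' : ℕ)) → i = i' := by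
    intro i i' h
    have hn2 : n ≤ 2 ^ d := by
      rw [hd]; exact Nat.le_pow_clog one_lt_two n
    have : (i : ℕ) = (i' : ℕ) := by
      apply Nat.eq_of_testBit_eq
      intro m
      by_cases hm : m < d
      · exact h ⟨m, hm⟩
      · have h1 : (i : ℕ) < 2 ^ m :=
          lt_of_lt_of_le i.isLt (hn2.trans (Nat.pow_le_pow_right (by norm_num) (le_of_not_gt hm)))
        have h2 : (i' : ℕ) < 2 ^ m :=
          lt_of_lt_of_le i'.isLt (hn2.trans (Nat.pow_le_pow_right (by norm_num) (le_of_not_gt hm)))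
        rw [Nat.testBit_lt_two_pow h1, Nat.testBit_lt_two_pow h2]
    exact Fin.ext this
  -- strict maximization
  have hmax : ∀ (j : Fin k) (s : Fin n) (i : Fin n), i ≠ σ j s →
      (W j).mulVec (x s) i + b i < (W j).mulVec (x s) (σ j s) + b (σ j s) := by
    intro j s i hi
    rw [hval, hval]
    have hz : (∑ b' : Fin d, (if ((σ j s : Fin n) : ℕ).testBit (b' : ℕ) = ((σ j s : Fin n) : ℕ).testBit (b' : ℕ)
        then (0:ℝ) else -1)) = 0 := by simp
    rw [hz]
    have hne : ∃ b' : Fin d, (i : ℕ).testBit (b' : ℕ) ≠ ((σ j s : Fin n) : ℕ).testBit (b' : ℕ) := by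
      by_contra hc
      push_neg at hc
      exact hi (hinj _ _ hc)
    obtain ⟨b0, hb0⟩ := hne
    calc (∑ b' : Fin d, (if (i : ℕ).testBit (b' : ℕ) = ((σ j s : Fin n) : ℕ).testBit (b' : ℕ)
            then (0:ℝ) else -1)) < ∑ _b' : Fin d, (0:ℝ) := by
          apply Finset.sum_lt_sum
          · intro b' _
            split <;> norm_num
          · exact ⟨b0, Finset.mem_univ _, by simp [hb0]⟩
      _ = 0 := by simp
  refine ⟨W, b, hmax, ?_⟩
  intro s r v hv0 hstep
  induction r generalizing s v with
  | nil => simpa [traceP] using hv0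
  | cons j rest ih =>
    have h1 : v 1 = σ j s := by
      by_contra hc
      have hlt := hmax j s (v 1) hc
      have hle := hstep 0 (by simp) (σ j s)
      rw [hv0] at hle
      simp at hle
      exact absurd hle (not_le.mpr hlt)
    have := ih (σ j s) (fun i => v (i + 1)) h1 ?_
    · simpa [traceP, List.length_cons] using this
    · intro i hi u
      have := hstep (i + 1) (by simpa using Nat.succ_lt_succ hi) u
      simpa using this
end

section
/- Let n ≥ 1 and k ≥ 1 be integers, let σ_1,…,σ_k be permutations of [n] with feature vectors x_v assigned to nodes v ∈ [n], and let f_1,…,f_k be functions mapping feature vectors to [n]. For each j ∈ [k] let ε_j = (1/n)·|{v ∈ [n] : f_j(x_v) ≠ σ_j(v)}| be the misclassification rate of f_j. Fix a query r = (r_1,…,r_ℓ) ∈ [k]^ℓ, let s be uniformly random on [n], and run the iterative algorithm v_0 = s, v_i = f_{r_i}(x_{v_{i−1}}) for i = 1,…,ℓ. Then the probability that v_ℓ ≠ σ_r(s) is at most Σ_{i=1}^{ℓ} ε_{r_i}. -/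
open scoped Classical

/-- `runIter f x r s` runs the iterative algorithm `v_0 = s`, `v_i = f_{r_i}(x_{v_{i−1}})`
along the query `r` and returns `v_ℓ`. -/
def runIter {n k : ℕ} {F : Type*} (f : Fin k → F → Fin n) (x : Fin n → F) :
    List (Fin k) → Fin n → Fin n
  | [], s => s
  | j :: rest, s => runIter f x rest (f j (x s))

/-
If `s` is misrouted along `j :: r`, then either `f_j` already errs at `s`, or `f_j(x_s) = σ_j(s)` and
the rest of the query misroutes `σ_j(s)`. As `σ_j` is a bijection, the second set of starts is no
larger than the error set of `r`, so induction on the query yields the union bound.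
-/

theorem Finset.card_filter_comp_ne_comp_le {α β γ : Type*} [Fintype α] [Fintype β]
    [DecidableEq β] [DecidableEq γ] (a₁ : α → β) (e : α ≃ β) (a₂ b₂ : β → γ) :
    (Finset.univ.filter fun s => a₂ (a₁ s) ≠ b₂ (e s)).card ≤
      (Finset.univ.filter fun s => a₁ s ≠ e s).card +
        (Finset.univ.filter fun t => a₂ t ≠ b₂ t).card := by
  have hsub : (Finset.univ.filter fun s => a₂ (a₁ s) ≠ b₂ (e s)) ⊆
      (Finset.univ.filter fun s => a₁ s ≠ e s) ∪
        (Finset.univ.filter fun t => a₂ t ≠ b₂ t).map e.symm.toEmbedding := by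
    intro s hs
    by_cases h : a₁ s = e s
    · simp_all
    · simp [h]
  calc _ ≤ _ := Finset.card_le_card hsub
    _ ≤ _ := Finset.card_union_le _ _
    _ = _ := by rw [Finset.card_map]

theorem card_runIter_ne_traceP_le {n k : ℕ} {F : Type*} (x : Fin n → F)
    (σ : Fin k → Equiv.Perm (Fin n)) (f : Fin k → F → Fin n) (r : List (Fin k)) :
    (Finset.univ.filter fun s => runIter f x r s ≠ traceP σ r s).card ≤
      (r.map fun j => (Finset.univ.filter fun v => f j (x v) ≠ σ j v).card).sum := by
  induction r with
  | nil => simp [runIter, traceP]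
  | cons j rest ih =>
    simp only [runIter, traceP, Equiv.Perm.mul_apply, List.map_cons, List.sum_cons]
    exact (Finset.card_filter_comp_ne_comp_le (fun v => f j (x v)) (σ j) _ _).trans
      (Nat.add_le_add_left ih _)

theorem stmt8_general (n k : ℕ) {F : Type*}
    (x : Fin n → F) (σ : Fin k → Equiv.Perm (Fin n)) (f : Fin k → F → Fin n)
    (r : List (Fin k)) :
    ((Finset.univ.filter fun s : Fin n => runIter f x r s ≠ traceP σ r s).card : ℝ) / n ≤
      (r.map fun j =>
        ((Finset.univ.filter fun v : Fin n => f j (x v) ≠ σ j v).card : ℝ) / n).sum := by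
  calc _ ≤ ((r.map fun j =>
        (Finset.univ.filter fun v : Fin n => f j (x v) ≠ σ j v).card).sum : ℝ) / n := by
        gcongr
        exact_mod_cast card_runIter_ne_traceP_le x σ f r
    _ = _ := by
        simp only [Nat.cast_list_sum, List.map_map, div_eq_mul_inv, ← List.sum_map_mul_right]
        rfl

/-- Errors compose: if each local classifier `f_j` has misclassification rate `ε_j`,
then for a uniformly random start `s` the iterative algorithm fails to output `σ_r(s)`
with probability at most `Σ_{i=1}^ℓ ε_{r_i}`. -/
theorem stmt8 (n k : ℕ) (hn : 1 ≤ n) (hk : 1 ≤ k) {F : Type*}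
    (x : Fin n → F) (σ : Fin k → Equiv.Perm (Fin n)) (f : Fin k → F → Fin n)
    (r : List (Fin k)) :
    ((Finset.univ.filter fun s : Fin n => runIter f x r s ≠ traceP σ r s).card : ℝ) / n ≤
      (r.map fun j =>
        ((Finset.univ.filter fun v : Fin n => f j (x v) ≠ σ j v).card : ℝ) / n).sum :=
  stmt8_general n k x σ f r
end

section
/- For every ε > 0 there exist a finite directed graph G = (V, E), a seed set V_0 ⊆ V, a budget B ≥ 1, and a coverage function F(S) = |⋃_{v∈S} C(v)| (which is monotone and submodular) such that: every run of the frontier-greedy policy — which starts from V_0 and for B steps adds a node u from the current frontier maximizing the immediate marginal gain F(S ∪ {u}) − F(S), with arbitrary tie-breaking — produces a final set S_greedy with F(S_greedy) ≤ ε · max_{S ∈ 𝓕_B(V_0)} F(S). In particular, the approximation ratio of frontier-greedy relative to the optimal reachable set can be made arbitrarily small. -/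
open scoped Classical

def neighborStep {V : Type*} (E : V → V → Prop) (S S' : Finset V) : Prop :=
  ∃ u : V, (∃ v ∈ S, E v u) ∧ S' = insert u S

def Feasible {V : Type*} (E : V → V → Prop) (V0 : Finset V) (B : ℕ) (S : Finset V) : Prop :=
  V0 ⊆ S ∧ S.card ≤ V0.card + B ∧ Relation.ReflTransGen (neighborStep E) V0 S

def frontierSet {V : Type*} (E : V → V → Prop) (S : Finset V) : Set V :=
  {u | (∃ v ∈ S, E v u) ∧ u ∉ S}

noncomputable def coverVal {V Z : Type*} (C : V → Finset Z) (S : Finset V) : ℝ :=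
  ((S.biUnion C).card : ℝ)

def GreedyStep {V Z : Type*} (E : V → V → Prop) (C : V → Finset Z)
    (S S' : Finset V) : Prop :=
  (frontierSet E S = ∅ ∧ S' = S) ∨
    ∃ u ∈ frontierSet E S,
      (∀ u' ∈ frontierSet E S, coverVal C (insert u' S) ≤ coverVal C (insert u S)) ∧
      S' = insert u S

def exE : Fin 4 → Fin 4 → Prop := fun a b =>
  (a = 0 ∧ b = 1) ∨ (a = 1 ∧ b = 2) ∨ (a = 0 ∧ b = 3)

def exC (N : ℕ) : Fin 4 → Finset (Fin (N + 1)) := fun v =>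
  if v = 2 then Finset.univ else if v = 3 then {0} else ∅


lemma biUnion_inst_irrel {α β : Type*} (i1 i2 : DecidableEq β) (s : Finset α)
    (f : α → Finset β) : @Finset.biUnion α β i1 s f = @Finset.biUnion α β i2 s f := by
  cases Subsingleton.elim i1 i2; rfl

/-- If `2 ∈ s` then coverage is full. -/
lemma coverStar (N : ℕ) (s : Finset (Fin 4)) (h2 : (2 : Fin 4) ∈ s) :
    coverVal (exC N) s = N + 1 := by
  unfold coverVal
  rw [biUnion_inst_irrel _ (instDecidableEqFin (N+1)) s (exC N)]
  have h : s.biUnion (exC N) = Finset.univ :=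
    Finset.eq_univ_of_forall fun z => Finset.mem_biUnion.mpr ⟨2, h2, by simp [exC]⟩
  rw [h]
  simp

/-- If `2 ∉ s` then coverage is at most 1. -/
lemma coverSmall (N : ℕ) (s : Finset (Fin 4)) (h2 : (2 : Fin 4) ∉ s) :
    coverVal (exC N) s ≤ 1 := by
  unfold coverVal
  rw [biUnion_inst_irrel _ (instDecidableEqFin (N+1)) s (exC N)]
  have hsub : s.biUnion (exC N) ⊆ {0} := by
    intro z hz
    obtain ⟨v, hv, hzv⟩ := Finset.mem_biUnion.mp hz
    have hv2 : v ≠ 2 := fun h => h2 (h ▸ hv)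
    simp only [exC, if_neg hv2] at hzv
    by_cases h3 : v = 3
    · simpa [h3] using hzv
    · simp [h3] at hzv
  have h := Finset.card_le_card hsub
  have h1 : (({0} : Finset (Fin (N+1))).card) = 1 := Finset.card_singleton _
  rw [h1] at h
  exact_mod_cast h

/-- If `2 ∉ s` and `3 ∉ s` then coverage is 0. -/
lemma coverZero (N : ℕ) (s : Finset (Fin 4)) (h2 : (2 : Fin 4) ∉ s)
    (h3 : (3 : Fin 4) ∉ s) : coverVal (exC N) s = 0 := by
  unfold coverVal
  rw [biUnion_inst_irrel _ (instDecidableEqFin (N+1)) s (exC N)]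
  have h : s.biUnion (exC N) = ∅ := by
    apply Finset.eq_empty_of_forall_notMem
    intro z hz
    obtain ⟨v, hv, hzv⟩ := Finset.mem_biUnion.mp hz
    have hv2 : v ≠ 2 := fun h => h2 (h ▸ hv)
    have hv3 : v ≠ 3 := fun h => h3 (h ▸ hv)
    simp [exC, hv2, hv3] at hzv
  rw [h]
  simp

/-- If `3 ∈ s` then coverage is at least 1. -/
lemma coverOne (N : ℕ) (s : Finset (Fin 4)) (h3 : (3 : Fin 4) ∈ s) :
    1 ≤ coverVal (exC N) s := by
  unfold coverVal
  rw [biUnion_inst_irrel _ (instDecidableEqFin (N+1)) s (exC N)]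
  have h0 : (0 : Fin (N+1)) ∈ s.biUnion (exC N) :=
    Finset.mem_biUnion.mpr ⟨3, h3, by simp [exC]⟩
  have h : 1 ≤ (s.biUnion (exC N)).card := Finset.card_pos.mpr ⟨0, h0⟩
  exact_mod_cast h

/-- Frontier-greedy can be arbitrarily bad: for every `ε > 0` there are a finite directed
graph, a seed set `V_0`, a budget `B ≥ 1`, and a (monotone submodular) coverage function
such that every run of the frontier-greedy policy ends with coverage at most `ε` times
the coverage of some feasible set (hence at most `ε` times the optimum over `𝓕_B(V_0)`). -/
theorem stmt10 :
    ∀ ε : ℝ, 0 < ε →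
      ∃ (V : Type) (Z : Type), Finite V ∧ Finite Z ∧
        ∃ (E : V → V → Prop) (C : V → Finset Z) (V0 : Finset V) (B : ℕ),
          1 ≤ B ∧
          ∃ Sstar : Finset V, Feasible E V0 B Sstar ∧
            ∀ S : ℕ → Finset V, S 0 = V0 →
              (∀ m < B, GreedyStep E C (S m) (S (m + 1))) →
              coverVal C (S B) ≤ ε * coverVal C Sstar := by
  intro ε hε
  set N : ℕ := ⌈ε⁻¹⌉₊ with hN
  refine ⟨Fin 4, Fin (N + 1), inferInstance, inferInstance,
    exE, exC N, {0}, 2, by norm_num,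
    insert 2 (insert 1 ({0} : Finset (Fin 4))), ?_, ?_⟩
  · refine ⟨by decide, by decide, ?_⟩
    have h1 : neighborStep exE ({0} : Finset (Fin 4)) (insert 1 {0}) :=
      ⟨1, ⟨0, by simp, Or.inl ⟨rfl, rfl⟩⟩, Finset.ext fun x => by simp⟩
    have h2 : neighborStep exE (insert 1 ({0} : Finset (Fin 4)))
        (insert 2 (insert 1 {0})) :=
      ⟨2, ⟨1, by simp, Or.inr (Or.inl ⟨rfl, rfl⟩)⟩, Finset.ext fun x => by simp⟩
    exact (Relation.ReflTransGen.refl.tail h1).tail h2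
  · intro S hS0 hstep
    have hg0 := hstep 0 (by norm_num)
    rw [hS0] at hg0
    have h3front : (3 : Fin 4) ∈ frontierSet exE ({0} : Finset (Fin 4)) :=
      ⟨⟨0, by simp, Or.inr (Or.inr ⟨rfl, rfl⟩)⟩, by simp⟩
    have hS1 : S 1 = insert 3 ({0} : Finset (Fin 4)) := by
      rcases hg0 with ⟨hemp, _⟩ | ⟨u, hu, hmax, hS'⟩
      · exact absurd (hemp ▸ h3front) (Set.notMem_empty _)
      · obtain ⟨⟨v, hv, hE⟩, hnot⟩ := hu
        have hv0 : v = 0 := by simpa using hv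
        subst hv0
        rcases hE with ⟨_, hu1⟩ | ⟨h01, _⟩ | ⟨_, hu3⟩
        · exfalso
          have hle := hmax 3 h3front
          subst hu1
          have hbad : (1 : ℝ) ≤ 0 :=
            le_trans (coverOne N _ (by simp))
              (le_of_le_of_eq hle (coverZero N _ (by simp) (by simp)))
          linarith
        · exact absurd h01 (by decide)
        · subst hu3; rw [hS']; exact Finset.ext fun x => by simp
    have hg1 := hstep 1 (by norm_num)
    rw [hS1] at hg1
    have h1front : (1 : Fin 4) ∈ frontierSet exE (insert 3 ({0} : Finset (Fin 4))) :=
      ⟨⟨0, by simp, Or.inl ⟨rfl, rfl⟩⟩, by simp⟩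
    have hS2 : S 2 = insert 1 (insert 3 ({0} : Finset (Fin 4))) := by
      rcases hg1 with ⟨hemp, _⟩ | ⟨u, hu, hmax, hS'⟩
      · exact absurd (hemp ▸ h1front) (Set.notMem_empty _)
      · obtain ⟨⟨v, hv, hE⟩, hnot⟩ := hu
        rcases hE with ⟨hv0, hu1⟩ | ⟨hv1, _⟩ | ⟨hv0, hu3⟩
        · subst hu1; rw [hS']; exact Finset.ext fun x => by simp
        · have hv' : v = 3 ∨ v = 0 := by simpa using hv
          rcases hv' with h | h <;> rw [h] at hv1 <;> exact absurd hv1 (by decide)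
        · exfalso; rw [hu3] at hnot; exact hnot (by simp)
    rw [hS2]
    have hg : coverVal (exC N) (insert 1 (insert 3 ({0} : Finset (Fin 4)))) ≤ 1 :=
      coverSmall N _ (by simp)
    have hst : coverVal (exC N) (insert 2 (insert 1 ({0} : Finset (Fin 4)))) = N + 1 :=
      coverStar N _ (by simp)
    rw [hst]
    have hle : ε⁻¹ ≤ (N : ℝ) := Nat.le_ceil _
    have h1 : (1 : ℝ) = ε * ε⁻¹ := by field_simp
    calc coverVal (exC N) (insert 1 (insert 3 ({0} : Finset (Fin 4)))) ≤ 1 := hg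
      _ = ε * ε⁻¹ := h1
      _ ≤ ε * (N + 1) := by
          apply mul_le_mul_of_nonneg_left _ hε.le
          linarith
end

section
/- Let α, β ∈ (0, 1], let B ≥ 1 be an integer, and let F* ≥ 0 be a real number. Let (Ω, 𝓕, P) be a probability space with a filtration 𝓕_0 ⊆ 𝓕_1 ⊆ ⋯ ⊆ 𝓕_B, and let Y_0, Y_1, …, Y_B be integrable real random variables with Y_b 𝓕_b-measurable, Y_0 ≥ 0 and Y_b ≤ F* almost surely for all b, and E[Y_{b+1} − Y_b | 𝓕_b] ≥ (αβ / (B − b)) · (F* − Y_b) almost surely for every 0 ≤ b ≤ B−1. Then E[Y_B] ≥ (1 − e^{−αβ}) · F*. -/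
/-! Write `d b = F* − E[Y_b]` for the expected gap to the optimum. Integrating the conditional
hypothesis gives `d (b+1) ≤ (1 − c_b) d b` with `c_b = αβ/(B−b)`, and `d b ≥ 0` because
`Y_b ≤ F*`. Since `1 − c ≤ e^{−c}`, the gap decays like `e^{−∑ c_b} d 0`, and
`∑_{b<B} c_b ≥ c_{B−1} = αβ` while `d 0 ≤ F*` because `Y_0 ≥ 0`. -/

open MeasureTheory

lemma integral_le_integral_of_ae_le_condExp {Ω : Type*} {m m0 : MeasurableSpace Ω}
    {μ : Measure Ω} [IsFiniteMeasure μ] {f g : Ω → ℝ} (hm : m ≤ m0) (hg : Integrable g μ)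
    (hgf : g ≤ᵐ[μ] μ[f | m]) :
    ∫ ω, g ω ∂μ ≤ ∫ ω, f ω ∂μ :=
  integral_condExp (μ := μ) hm (f := f) ▸ integral_mono_ae hg integrable_condExp hgf

lemma le_exp_neg_sum_mul_of_le_one_sub_mul {c d : ℕ → ℝ} {n : ℕ}
    (hd : ∀ b < n, 0 ≤ d b) (hstep : ∀ b < n, d (b + 1) ≤ (1 - c b) * d b) :
    d n ≤ Real.exp (-∑ i ∈ Finset.range n, c i) * d 0 := by
  induction n with
  | zero => simp
  | succ n ih =>
    have hdn := ih (fun b hb => hd b (by omega)) (fun b hb => hstep b (by omega))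
    calc d (n + 1) ≤ (1 - c n) * d n := hstep n n.lt_succ_self
      _ ≤ Real.exp (-c n) * d n := by
        gcongr
        · exact hd n n.lt_succ_self
        · linarith [Real.add_one_le_exp (-c n)]
      _ ≤ Real.exp (-c n) * (Real.exp (-∑ i ∈ Finset.range n, c i) * d 0) := by gcongr
      _ = Real.exp (-∑ i ∈ Finset.range (n + 1), c i) * d 0 := by
        rw [← mul_assoc, ← Real.exp_add, Finset.sum_range_succ, neg_add, add_comm]

lemma le_sum_range_div_sub {a : ℝ} (ha : 0 ≤ a) {B : ℕ} (hB : 1 ≤ B) :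
    a ≤ ∑ i ∈ Finset.range B, a / ((B - i : ℕ) : ℝ) := by
  have hlast : a / ((B - (B - 1) : ℕ) : ℝ) = a := by simp [Nat.sub_sub_self hB]
  calc a = a / ((B - (B - 1) : ℕ) : ℝ) := hlast.symm
    _ ≤ ∑ i ∈ Finset.range B, a / ((B - i : ℕ) : ℝ) :=
      Finset.single_le_sum (f := fun i => a / ((B - i : ℕ) : ℝ)) (fun _ _ => by positivity)
        (Finset.mem_range.mpr (by omega))

theorem stmt11_general {Ω : Type*} {m0 : MeasurableSpace Ω} (μ : Measure Ω)
    [IsProbabilityMeasure μ] (ℱ : Filtration ℕ m0)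
    (α β : ℝ) (hα : α ∈ Set.Ioc (0 : ℝ) 1) (hβ : β ∈ Set.Ioc (0 : ℝ) 1)
    (B : ℕ) (hB : 1 ≤ B) (Fstar : ℝ)
    (Y : ℕ → Ω → ℝ)
    (hint : ∀ b ≤ B, Integrable (Y b) μ)
    (hY0 : 0 ≤ᵐ[μ] Y 0)
    (hYle : ∀ b ≤ B, Y b ≤ᵐ[μ] fun _ => Fstar)
    (hcond : ∀ b < B,
      (fun ω => α * β / ((B - b : ℕ) : ℝ) * (Fstar - Y b ω)) ≤ᵐ[μ]
        μ[Y (b + 1) - Y b | ℱ b]) :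
    (1 - Real.exp (-(α * β))) * Fstar ≤ ∫ ω, Y B ω ∂μ := by
  have hαβ : 0 ≤ α * β := mul_nonneg hα.1.le hβ.1.le
  set d : ℕ → ℝ := fun b => Fstar - ∫ ω, Y b ω ∂μ with hd
  have hgap : ∀ b < B, 0 ≤ d b := fun b hb => by
    simpa [hd] using integral_mono_ae (hint b hb.le) (integrable_const Fstar) (hYle b hb.le)
  have hstep : ∀ b < B, d (b + 1) ≤ (1 - α * β / ((B - b : ℕ) : ℝ)) * d b := fun b hb => by
    have h : ∫ ω, α * β / ((B - b : ℕ) : ℝ) * (Fstar - Y b ω) ∂μ ≤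
        ∫ ω, Y (b + 1) ω - Y b ω ∂μ := integral_le_integral_of_ae_le_condExp (ℱ.le b)
      (((integrable_const Fstar).sub (hint b hb.le)).const_mul _) (hcond b hb)
    rw [integral_const_mul, integral_sub (integrable_const _) (hint b hb.le),
      integral_sub (hint (b + 1) hb) (hint b hb.le)] at h
    simp only [integral_const, probReal_univ, one_smul] at h
    simp only [hd]
    linarith
  have hd0 : d 0 ≤ Fstar := by simpa [hd] using integral_nonneg_of_ae hY0
  have hdB := le_exp_neg_sum_mul_of_le_one_sub_mul hgap hstep
  have hexp : Real.exp (-∑ i ∈ Finset.range B, α * β / ((B - i : ℕ) : ℝ)) ≤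
      Real.exp (-(α * β)) :=
    Real.exp_le_exp.mpr (neg_le_neg (le_sum_range_div_sub hαβ hB))
  have hgapB : d B ≤ Real.exp (-(α * β)) * Fstar :=
    hdB.trans (mul_le_mul hexp hd0 (hgap 0 (by omega)) (Real.exp_nonneg _))
  simp only [hd] at hgapB
  linarith

/-- Frontier-aware approximate greedy guarantee (stochastic version): if `Y_b` is the
coverage value after `b` additions, adapted to a filtration, bounded below by `0` at time
`0` and above by `F*`, and the expected one-step gain conditioned on the past satisfies
`E[Y_{b+1} − Y_b | 𝓕_b] ≥ (αβ/(B−b))·(F* − Y_b)`, then `E[Y_B] ≥ (1 − e^{−αβ})·F*`. -/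
theorem stmt11 {Ω : Type*} {m0 : MeasurableSpace Ω} (μ : Measure Ω)
    [IsProbabilityMeasure μ] (ℱ : Filtration ℕ m0)
    (α β : ℝ) (hα : α ∈ Set.Ioc (0 : ℝ) 1) (hβ : β ∈ Set.Ioc (0 : ℝ) 1)
    (B : ℕ) (hB : 1 ≤ B) (Fstar : ℝ) (hFstar : 0 ≤ Fstar)
    (Y : ℕ → Ω → ℝ)
    (hint : ∀ b ≤ B, Integrable (Y b) μ)
    (hmeas : ∀ b ≤ B, StronglyMeasurable[ℱ b] (Y b))
    (hY0 : 0 ≤ᵐ[μ] Y 0)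
    (hYle : ∀ b ≤ B, Y b ≤ᵐ[μ] fun _ => Fstar)
    (hcond : ∀ b < B,
      (fun ω => α * β / ((B - b : ℕ) : ℝ) * (Fstar - Y b ω)) ≤ᵐ[μ]
        μ[Y (b + 1) - Y b | ℱ b]) :
    (1 - Real.exp (-(α * β))) * Fstar ≤ ∫ ω, Y B ω ∂μ :=
  stmt11_general μ ℱ α β hα hβ B hB Fstar Y hint hY0 hYle hcond
end

section
/- Let α, β ∈ (0,1], let B ≥ 1 be an integer, let F* ≥ 0 be a real number, and let x_0, x_1, …, x_B be reals with x_0 ≥ 0, x_b ≤ F* for all 0 ≤ b ≤ B, and x_{b+1} − x_b ≥ (αβ / (B − b)) · (F* − x_b) for every 0 ≤ b ≤ B−1. Then x_B ≥ (1 − e^{−αβ}) · F*. -/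
/-- Deterministic frontier-aware greedy recursion: if `x_0 ≥ 0`, `x_b ≤ F*` for all
`b ≤ B`, and `x_{b+1} − x_b ≥ (αβ/(B−b))·(F* − x_b)` for all `b < B`, then
`x_B ≥ (1 − e^{−αβ})·F*`. -/
theorem stmt12 (α β : ℝ) (hα : α ∈ Set.Ioc (0 : ℝ) 1) (hβ : β ∈ Set.Ioc (0 : ℝ) 1)
    (B : ℕ) (hB : 1 ≤ B) (Fstar : ℝ) (hFstar : 0 ≤ Fstar)
    (x : ℕ → ℝ) (hx0 : 0 ≤ x 0) (hxle : ∀ b ≤ B, x b ≤ Fstar)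
    (hrec : ∀ b < B, α * β / ((B - b : ℕ) : ℝ) * (Fstar - x b) ≤ x (b + 1) - x b) :
    (1 - Real.exp (-(α * β))) * Fstar ≤ x B := by
  obtain ⟨hα0, hα1⟩ := hα
  obtain ⟨hβ0, hβ1⟩ := hβ
  have hab0 : 0 < α * β := mul_pos hα0 hβ0
  have hab1 : α * β ≤ 1 := by nlinarith
  -- x is nonnegative on [0, B]
  have hnn : ∀ b ≤ B, 0 ≤ x b := by
    intro b hb
    induction b with
    | zero => exact hx0
    | succ n ih =>
      have hnB : n < B := hb
      have h1 := hrec n hnB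
      have hcast : (0 : ℝ) < ((B - n : ℕ) : ℝ) := by
        have : 0 < B - n := Nat.sub_pos_of_lt hnB
        exact_mod_cast this
      have hxn : 0 ≤ x n := ih (le_of_lt hnB)
      have hxnF : x n ≤ Fstar := hxle n (le_of_lt hnB)
      have hstep : 0 ≤ α * β / ((B - n : ℕ) : ℝ) * (Fstar - x n) := by
        apply mul_nonneg
        · positivity
        · linarith
      linarith
  -- apply the recursion at b = B - 1
  have hBlt : B - 1 < B := Nat.sub_lt hB one_pos
  have h1 := hrec (B - 1) hBlt
  have hcast : ((B - (B - 1) : ℕ) : ℝ) = 1 := by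
    have : B - (B - 1) = 1 := by omega
    rw [this]; norm_num
  rw [hcast, div_one] at h1
  have hBe : B - 1 + 1 = B := by omega
  rw [hBe] at h1
  have hxB1 : 0 ≤ x (B - 1) := hnn (B - 1) (le_of_lt hBlt)
  -- x B ≥ αβ Fstar
  have hxB : α * β * Fstar ≤ x B := by nlinarith
  -- 1 - exp(-t) ≤ t
  have hexp : 1 - Real.exp (-(α * β)) ≤ α * β := by
    have := Real.add_one_le_exp (-(α * β))
    linarith
  nlinarith
end
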